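/- arXiv:1010.4345 — 6 statements merged into one kernel-verified Lean document; each statement's English description precedes it below -/
import Mathlib

section
/- Let M be a positive semidefinite p×p real matrix. For a positive integer k, define the maximal k-sparse eigenvalue φ_M(k) = max{ α'Mα : α ∈ ℝ^p, ‖α‖₀ ≤ k, ‖α‖₂ = 1 }. Then for any integer k ≥ 1 and real ℓ ≥ 1, φ_M(⌈ℓk⌉) ≤ ⌈ℓ⌉ · φ_M(k). -/
/-!
If `x'Mx ≤ c‖x‖²` on `k`-sparse vectors and `y'My ≤ d‖y‖²` on `j`-sparse ones, then
`α'Mα ≤ (c + d)‖α‖²` on `(k + j)`-sparse vectors: write `α = x + y` with disjoint supports, so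
that `‖α‖² = ‖x‖² + ‖y‖²`, and bound the cross term by Cauchy–Schwarz for the form of `M` and
AM–GM, `2 x'My ≤ 2 √(c‖x‖² d‖y‖²) ≤ c‖y‖² + d‖x‖²`. Iterating, `φ(mk) ≤ m φ(k)`, and
`⌈ℓk⌉ ≤ ⌈ℓ⌉k`.
-/

open Matrix Finset

lemma exists_add_eq_of_card_support_le_add {n R : Type*} [Fintype n] [DecidableEq n]
    [NonUnitalNonAssocSemiring R] [DecidableEq R] {α : n → R} {k j : ℕ}
    (hα : #{i | α i ≠ 0} ≤ k + j) :
    ∃ x y : n → R, x + y = α ∧ #{i | x i ≠ 0} ≤ k ∧ #{i | y i ≠ 0} ≤ j ∧ x ⬝ᵥ y = 0 := by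
  set s : Finset n := {i | α i ≠ 0}
  obtain ⟨t, hts, ht⟩ := exists_subset_card_eq (min_le_right k #s)
  refine ⟨t.piecewise α 0, t.piecewise 0 α, ?_, ?_, ?_, ?_⟩
  · ext i; by_cases h : i ∈ t <;> simp [h]
  · refine (card_le_card fun i hi => ?_).trans (ht.trans_le (min_le_left _ _))
    by_contra h
    simp [h] at hi
  · have hsub : ({i | t.piecewise (0 : n → R) α i ≠ 0} : Finset n) ⊆ s \ t := fun i hi => by
      by_cases h : i ∈ t <;> simp_all [s]
    have := card_sdiff_of_subset hts
    have := card_le_card hsub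
    omega
  · refine sum_eq_zero fun i _ => ?_
    by_cases h : i ∈ t <;> simp [h]

namespace Matrix.PosSemidef

variable {n : Type*} [Fintype n] {M : Matrix n n ℝ}

lemma dotProduct_mulVec_comm (hM : M.PosSemidef) (x y : n → ℝ) :
    x ⬝ᵥ M *ᵥ y = y ⬝ᵥ M *ᵥ x := by
  rw [dotProduct_mulVec, ← mulVec_transpose, dotProduct_comm,
    ← conjTranspose_eq_transpose_of_trivial, hM.isHermitian.eq]

lemma sq_dotProduct_mulVec_le (hM : M.PosSemidef) (x y : n → ℝ) :
    (x ⬝ᵥ M *ᵥ y) ^ 2 ≤ (x ⬝ᵥ M *ᵥ x) * (y ⬝ᵥ M *ᵥ y) := by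
  have hdisc := discrim_le_zero (a := x ⬝ᵥ M *ᵥ x) (b := 2 * (x ⬝ᵥ M *ᵥ y))
    (c := y ⬝ᵥ M *ᵥ y) fun t => by
      have := hM.dotProduct_mulVec_nonneg (t • x + y)
      simp only [star_trivial, mulVec_add, mulVec_smul, dotProduct_add, add_dotProduct,
        dotProduct_smul, smul_dotProduct, smul_eq_mul, dotProduct_mulVec_comm hM y x] at this
      linarith
  rw [discrim] at hdisc
  linarith

end Matrix.PosSemidef

section SparseRayleigh

variable {n : Type*} [Fintype n]

def SparseRayleighBound (M : Matrix n n ℝ) (k : ℕ) (c : ℝ) : Prop :=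
  ∀ α : n → ℝ, #{j | α j ≠ 0} ≤ k → α ⬝ᵥ M *ᵥ α ≤ c * ∑ j, α j ^ 2

def sparseRayleighSet (M : Matrix n n ℝ) (k : ℕ) : Set ℝ :=
  {x | ∃ α : n → ℝ, #{j | α j ≠ 0} ≤ k ∧ ∑ j, α j ^ 2 = 1 ∧ x = α ⬝ᵥ M *ᵥ α}

namespace SparseRayleighBound

variable {M : Matrix n n ℝ} {k j : ℕ} {c d : ℝ}

lemma mono (h : SparseRayleighBound M k c) (hjk : j ≤ k) : SparseRayleighBound M j c :=
  fun α hα => h α (hα.trans hjk)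

lemma zero (M : Matrix n n ℝ) (c : ℝ) : SparseRayleighBound M 0 c := by
  intro α hα
  obtain rfl : α = 0 := by
    ext i
    by_contra hi
    exact (card_pos.2 ⟨i, by simpa using hi⟩).ne' (Nat.le_zero.1 hα)
  simp

lemma add (hM : M.PosSemidef) (h₁ : SparseRayleighBound M k c) (h₂ : SparseRayleighBound M j d)
    (hc : 0 ≤ c) (hd : 0 ≤ d) : SparseRayleighBound M (k + j) (c + d) := by
  classical
  intro α hα
  obtain ⟨x, y, rfl, hx, hy, hxy⟩ := exists_add_eq_of_card_support_le_add hα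
  have hQ : (x + y) ⬝ᵥ M *ᵥ (x + y) =
      x ⬝ᵥ M *ᵥ x + 2 * (x ⬝ᵥ M *ᵥ y) + y ⬝ᵥ M *ᵥ y := by
    rw [mulVec_add, dotProduct_add, add_dotProduct, add_dotProduct, hM.dotProduct_mulVec_comm y x]
    ring
  have hnorm : ∑ i, (x + y) i ^ 2 = ∑ i, x i ^ 2 + ∑ i, y i ^ 2 + 2 * (x ⬝ᵥ y) := by
    simp only [dotProduct, Pi.add_apply, mul_sum, ← sum_add_distrib]
    exact sum_congr rfl fun i _ => by ring
  have hQx := h₁ x hx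
  have hQy := h₂ y hy
  have hCS := hM.sq_dotProduct_mulVec_le x y
  have hx0 := hM.dotProduct_mulVec_nonneg x
  have hy0 := hM.dotProduct_mulVec_nonneg y
  simp only [star_trivial] at hx0 hy0
  have hcross : 2 * (x ⬝ᵥ M *ᵥ y) ≤ c * ∑ i, y i ^ 2 + d * ∑ i, x i ^ 2 := by
    have hprod := hCS.trans (mul_le_mul hQx hQy hy0 (by positivity))
    refine (abs_le_of_sq_le_sq' ?_ (by positivity)).2
    nlinarith [sq_nonneg (c * ∑ i, y i ^ 2 - d * ∑ i, x i ^ 2)]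
  rw [hQ, hnorm, hxy]
  linarith

lemma nsmul (hM : M.PosSemidef) (h : SparseRayleighBound M k c) (hc : 0 ≤ c) (m : ℕ) :
    SparseRayleighBound M (m * k) (m * c) := by
  induction m with
  | zero => simpa using zero M 0
  | succ m ih =>
    simpa [add_mul] using ih.add hM h (by positivity) hc

end SparseRayleighBound

lemma bddAbove_sparseRayleighSet (M : Matrix n n ℝ) (k : ℕ) :
    BddAbove (sparseRayleighSet M k) := by
  have hsphere : IsCompact {α : n → ℝ | ∑ j, α j ^ 2 = 1} := by
    refine Metric.isCompact_of_isClosed_isBounded (isClosed_eq (by fun_prop) continuous_const)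
      ((Metric.isBounded_closedBall (x := 0) (r := 1)).subset fun α hα => ?_)
    rw [mem_closedBall_zero_iff, pi_norm_le_iff_of_nonneg zero_le_one]
    intro j
    rw [Real.norm_eq_abs, ← sq_le_one_iff_abs_le_one]
    exact hα ▸ single_le_sum (fun i _ => sq_nonneg (α i)) (mem_univ j)
  refine ((hsphere.image (f := fun α => α ⬝ᵥ M *ᵥ α) (by fun_prop)).bddAbove).mono ?_
  rintro _ ⟨α, -, hα, rfl⟩
  exact ⟨α, hα, rfl⟩

lemma sparseRayleighBound_sSup (M : Matrix n n ℝ) (k : ℕ) :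
    SparseRayleighBound M k (sSup (sparseRayleighSet M k)) := by
  intro α hα
  rcases eq_or_ne α 0 with rfl | hα0
  · simp
  set s := ∑ j, α j ^ 2
  have hs : 0 < s := by
    obtain ⟨i, hi⟩ := Function.ne_iff.1 hα0
    exact (pow_two_pos_of_ne_zero hi).trans_le
      (single_le_sum (fun j _ => sq_nonneg (α j)) (mem_univ i))
  set β := (√s)⁻¹ • α
  have hβ : β ⬝ᵥ M *ᵥ β ∈ sparseRayleighSet M k := by
    refine ⟨β, ?_, ?_, rfl⟩
    · simpa [β, (Real.sqrt_pos.2 hs).ne'] using hα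
    · simp only [β, Pi.smul_apply, smul_eq_mul, mul_pow, ← mul_sum, inv_pow,
        Real.sq_sqrt hs.le]
      exact inv_mul_cancel₀ hs.ne'
  have hαβ : α ⬝ᵥ M *ᵥ α = s * (β ⬝ᵥ M *ᵥ β) := by
    simp only [β, mulVec_smul, dotProduct_smul, smul_dotProduct, smul_eq_mul]
    field_simp
    rw [Real.sq_sqrt hs.le]
  rw [hαβ, mul_comm (sSup _)]
  exact mul_le_mul_of_nonneg_left (le_csSup (bddAbove_sparseRayleighSet M k) hβ) hs.le

lemma sSup_sparseRayleighSet_le {M : Matrix n n ℝ} {k : ℕ} {c : ℝ}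
    (h : SparseRayleighBound M k c) (hc : 0 ≤ c) : sSup (sparseRayleighSet M k) ≤ c :=
  Real.sSup_le (fun _ ⟨α, hα, hnorm, hx⟩ => hx ▸ by simpa [hnorm] using h α hα) hc

lemma sSup_sparseRayleighSet_nonneg {M : Matrix n n ℝ} (hM : M.PosSemidef) (k : ℕ) :
    0 ≤ sSup (sparseRayleighSet M k) :=
  Real.sSup_nonneg fun _ ⟨α, _, _, hx⟩ => hx ▸ by simpa using hM.dotProduct_mulVec_nonneg α

end SparseRayleigh

theorem sparse_eigenvalue_sublinear_general
    (p : ℕ) (M : Matrix (Fin p) (Fin p) ℝ) (hM : M.PosSemidef)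
    (φ : ℕ → ℝ)
    (hφ : ∀ k : ℕ, φ k = sSup {x : ℝ | ∃ α : Fin p → ℝ,
      (Finset.univ.filter (fun j => α j ≠ 0)).card ≤ k ∧
      (∑ j, (α j) ^ 2) = 1 ∧ x = α ⬝ᵥ M.mulVec α})
    (k : ℕ) (ℓ : ℝ) :
    φ ⌈ℓ * k⌉₊ ≤ (⌈ℓ⌉₊ : ℝ) * φ k := by
  have hceil : ⌈ℓ * k⌉₊ ≤ ⌈ℓ⌉₊ * k := Nat.ceil_le.2 (by push_cast; gcongr; exact Nat.le_ceil ℓ)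
  have hφk := sSup_sparseRayleighSet_nonneg hM k
  rw [hφ, hφ]
  exact sSup_sparseRayleighSet_le
    (((sparseRayleighBound_sSup M k).nsmul hM hφk ⌈ℓ⌉₊).mono hceil) (by positivity)

/-- Sub-linearity of maximal sparse eigenvalues: for a positive semidefinite `p × p`
matrix `M`, the maximal `k`-sparse eigenvalue
`φ_M(k) = sup { α'Mα : ‖α‖₀ ≤ k, ‖α‖₂ = 1 }` satisfies
`φ_M(⌈ℓk⌉) ≤ ⌈ℓ⌉ · φ_M(k)` for any integer `k ≥ 1` and real `ℓ ≥ 1`. -/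
theorem sparse_eigenvalue_sublinear
    (p : ℕ) (M : Matrix (Fin p) (Fin p) ℝ) (hM : M.PosSemidef)
    (φ : ℕ → ℝ)
    (hφ : ∀ k : ℕ, φ k = sSup {x : ℝ | ∃ α : Fin p → ℝ,
      (Finset.univ.filter (fun j => α j ≠ 0)).card ≤ k ∧
      (∑ j, (α j) ^ 2) = 1 ∧ x = α ⬝ᵥ M.mulVec α})
    (k : ℕ) (hk : 1 ≤ k) (ℓ : ℝ) (hℓ : 1 ≤ ℓ) :
    φ ⌈ℓ * k⌉₊ ≤ (⌈ℓ⌉₊ : ℝ) * φ k :=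
  sparse_eigenvalue_sublinear_general p M hM φ hφ k ℓ
end

section
/- Let X_1,…,X_n be independent real random variables with mean zero and 1 ≤ r ≤ 2, and suppose (1/n)∑_{i=1}^n E[|X_i|^r] ≤ C. Then for any c > 0, P(|∑_{i=1}^n X_i|/n > c) ≤ 2C/(c^r n^{r−1}). -/
/-!
Von Bahr and Esseen's argument with the constant `2`: for `1 ≤ r ≤ 2` and all real `x, y`,
`|x + y|^r ≤ |x|^r + r |x|^r / x · y + 2 |y|^r`, where `r |x|^r / x` (read as `0` at `x = 0`) is
the derivative of `|·|^r` at `x`. Scaling reduces this to `|1 + t|^r ≤ 1 + r t + 2 |t|^r`, which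
follows from Bernoulli's inequality and the subadditivity of `s ↦ s^(r - 1)` after writing
`(1 + t)^r = (1 + t) (1 + t)^(r - 1)`.
If `S` is independent of a centred `Y`, the middle term has expectation zero, so
`E|S + Y|^r ≤ E|S|^r + 2 E|Y|^r`; induction over the summands gives
`E|∑ Xᵢ|^r ≤ 2 ∑ E|Xᵢ|^r ≤ 2 C n`, and Markov's inequality for `|∑ Xᵢ|^r` at level `(c n)^r`
finishes the proof.
-/

open MeasureTheory ProbabilityTheory Real

theorem rpow_eq_mul_rpow_sub_one {x r : ℝ} (hx : 0 ≤ x) (hr : 1 ≤ r) :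
    x ^ r = x * x ^ (r - 1) := by
  simpa using rpow_one_add' hx (y := r - 1) (by linarith)

theorem abs_one_add_rpow_le {r : ℝ} (hr1 : 1 ≤ r) (hr2 : r ≤ 2) (t : ℝ) :
    |1 + t| ^ r ≤ 1 + r * t + 2 * |t| ^ r := by
  have htr : 0 ≤ |t| ^ r := by positivity
  rcases le_or_gt t (-1) with ht | ht
  · rw [abs_of_nonpos (by linarith), abs_of_nonpos (by linarith)]
    have hmono : (-(1 + t)) ^ r ≤ (-t) ^ r :=
      rpow_le_rpow (by linarith) (by linarith) (by linarith)
    have hbern := one_add_mul_self_le_rpow_one_add (s := -t - 1) (by linarith) hr1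
    rw [add_sub_cancel] at hbern
    nlinarith
  rw [abs_of_pos (by linarith), rpow_eq_mul_rpow_sub_one (by linarith) hr1]
  rcases le_or_gt t 1 with ht1 | ht1
  · have hbern := rpow_one_add_le_one_add_mul_self ht.le (p := r - 1) (by linarith) (by linarith)
    have hsq : t ^ 2 ≤ |t| ^ r := by
      rw [← sq_abs, ← rpow_natCast]
      exact rpow_le_rpow_of_exponent_ge' (abs_nonneg t) (abs_le.2 ⟨ht.le, ht1⟩)
        (by linarith) (by norm_num; linarith)
    nlinarith
  · have hsub : (1 + t) ^ (r - 1) ≤ 1 + t ^ (r - 1) := by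
      simpa using rpow_add_le_add_rpow zero_le_one (by linarith : 0 ≤ t) (p := r - 1)
        (by linarith) (by linarith)
    have hle : t ^ (r - 1) ≤ t * t ^ (r - 1) := le_mul_of_one_le_left (by positivity) ht1.le
    rw [abs_of_pos (by linarith), rpow_eq_mul_rpow_sub_one (by linarith : 0 ≤ t) hr1]
    nlinarith [mul_le_mul_of_nonneg_left hsub (by linarith : 0 ≤ 1 + t)]

theorem abs_add_rpow_le {r : ℝ} (hr1 : 1 ≤ r) (hr2 : r ≤ 2) (x y : ℝ) :
    |x + y| ^ r ≤ |x| ^ r + r * (|x| ^ r / x) * y + 2 * |y| ^ r := by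
  have hr0 : r ≠ 0 := by linarith
  rcases eq_or_ne x 0 with rfl | hx
  · simp only [zero_add, abs_zero, zero_rpow hr0, div_zero, mul_zero, zero_mul]
    linarith [rpow_nonneg (abs_nonneg y) r]
  have hscale : ∀ z : ℝ, |x * z| ^ r = |x| ^ r * |z| ^ r := fun z ↦ by
    rw [abs_mul, mul_rpow (abs_nonneg x) (abs_nonneg z)]
  calc |x + y| ^ r = |x| ^ r * |1 + y / x| ^ r := by
        rw [← hscale, mul_add, mul_div_cancel₀ y hx, mul_one]
    _ ≤ |x| ^ r * (1 + r * (y / x) + 2 * |y / x| ^ r) :=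
        mul_le_mul_of_nonneg_left (abs_one_add_rpow_le hr1 hr2 _) (by positivity)
    _ = |x| ^ r + r * (|x| ^ r / x) * y + 2 * |x * (y / x)| ^ r := by
        rw [hscale]; field_simp
    _ = |x| ^ r + r * (|x| ^ r / x) * y + 2 * |y| ^ r := by rw [mul_div_cancel₀ y hx]

theorem abs_abs_rpow_div_self_le {r : ℝ} (hr : 1 ≤ r) (x : ℝ) :
    |(|x| ^ r / x)| ≤ 1 + |x| ^ r := by
  rcases eq_or_ne x 0 with rfl | hx
  · simp [zero_rpow (by linarith : r ≠ 0)]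
  have hx' : 0 < |x| := abs_pos.2 hx
  rw [abs_div, abs_of_nonneg (by positivity), div_le_iff₀ hx']
  rcases le_or_gt |x| 1 with h1 | h1
  · have : |x| ^ r ≤ |x| := by
      simpa using rpow_le_rpow_of_exponent_ge hx' h1 hr
    nlinarith [rpow_nonneg (abs_nonneg x) r]
  · nlinarith [rpow_nonneg (abs_nonneg x) r]

section Moments

variable {Ω : Type*} [MeasurableSpace Ω] {μ : Measure Ω}

theorem integral_abs_add_rpow_le [IsProbabilityMeasure μ] {r : ℝ} (hr1 : 1 ≤ r) (hr2 : r ≤ 2)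
    {S Y : Ω → ℝ} (hSm : Measurable S) (hYm : Measurable Y) (hSY : IndepFun S Y μ)
    (hY : Integrable Y μ) (hYmean : ∫ ω, Y ω ∂μ = 0)
    (hSr : Integrable (fun ω ↦ |S ω| ^ r) μ) (hYr : Integrable (fun ω ↦ |Y ω| ^ r) μ) :
    Integrable (fun ω ↦ |S ω + Y ω| ^ r) μ ∧
      ∫ ω, |S ω + Y ω| ^ r ∂μ ≤ ∫ ω, |S ω| ^ r ∂μ + 2 * ∫ ω, |Y ω| ^ r ∂μ := by
  set g : ℝ → ℝ := fun x ↦ r * (|x| ^ r / x)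
  have hg : Measurable g := by fun_prop
  have hgS : Integrable (fun ω ↦ g (S ω)) μ := by
    refine (((integrable_const 1).add hSr).const_mul r).mono' (hg.comp hSm).aestronglyMeasurable
      (ae_of_all _ fun ω ↦ ?_)
    rw [norm_mul, Real.norm_of_nonneg (by linarith), Real.norm_eq_abs]
    exact mul_le_mul_of_nonneg_left (abs_abs_rpow_div_self_le hr1 (S ω)) (by linarith)
  have hgSY : IndepFun (fun ω ↦ g (S ω)) Y μ := hSY.comp hg measurable_id
  have hprod : Integrable (fun ω ↦ g (S ω) * Y ω) μ := hgSY.integrable_mul hgS hY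
  have hcross : ∫ ω, g (S ω) * Y ω ∂μ = 0 := by
    simpa [hYmean] using
      hgSY.integral_mul_eq_mul_integral hgS.aestronglyMeasurable hY.aestronglyMeasurable
  have hSprod : Integrable (fun ω ↦ |S ω| ^ r + g (S ω) * Y ω) μ := hSr.add hprod
  have hbound : Integrable (fun ω ↦ |S ω| ^ r + g (S ω) * Y ω + 2 * |Y ω| ^ r) μ :=
    hSprod.add (hYr.const_mul 2)
  have hpt : ∀ ω, |S ω + Y ω| ^ r ≤ |S ω| ^ r + g (S ω) * Y ω + 2 * |Y ω| ^ r :=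
    fun ω ↦ abs_add_rpow_le hr1 hr2 (S ω) (Y ω)
  have hint : Integrable (fun ω ↦ |S ω + Y ω| ^ r) μ :=
    hbound.mono' (by fun_prop : Measurable fun ω ↦ |S ω + Y ω| ^ r).aestronglyMeasurable (ae_of_all _ fun ω ↦ by
      rw [Real.norm_of_nonneg (by positivity)]; exact hpt ω)
  refine ⟨hint, ?_⟩
  calc ∫ ω, |S ω + Y ω| ^ r ∂μ
      ≤ ∫ ω, (|S ω| ^ r + g (S ω) * Y ω + 2 * |Y ω| ^ r) ∂μ := integral_mono hint hbound hpt
    _ = ∫ ω, |S ω| ^ r ∂μ + 2 * ∫ ω, |Y ω| ^ r ∂μ := by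
        rw [integral_add hSprod (hYr.const_mul 2), integral_add hSr hprod,
          integral_const_mul, hcross, add_zero]

theorem integral_abs_sum_rpow_le_two_mul [IsProbabilityMeasure μ] {ι : Type*} {X : ι → Ω → ℝ}
    (hmeas : ∀ i, Measurable (X i)) (hindep : iIndepFun X μ) (hint : ∀ i, Integrable (X i) μ)
    (hmean : ∀ i, ∫ ω, X i ω ∂μ = 0) {r : ℝ} (hr1 : 1 ≤ r) (hr2 : r ≤ 2)
    (hrint : ∀ i, Integrable (fun ω ↦ |X i ω| ^ r) μ) (s : Finset ι) :
    Integrable (fun ω ↦ |∑ i ∈ s, X i ω| ^ r) μ ∧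
      ∫ ω, |∑ i ∈ s, X i ω| ^ r ∂μ ≤ 2 * ∑ i ∈ s, ∫ ω, |X i ω| ^ r ∂μ := by
  classical
  induction s using Finset.induction with
  | empty => simp [zero_rpow (by linarith : r ≠ 0)]
  | @insert i s hi ih =>
    have hSY : IndepFun (fun ω ↦ ∑ j ∈ s, X j ω) (X i) μ := by
      simpa [Finset.sum_fn] using hindep.indepFun_finsetSum_of_notMem hmeas hi
    obtain ⟨hInt, hle⟩ := integral_abs_add_rpow_le hr1 hr2 (by fun_prop) (hmeas i) hSY
      (hint i) (hmean i) ih.1 (hrint i)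
    simp only [Finset.sum_insert hi, add_comm (X i _)]
    refine ⟨hInt, hle.trans ?_⟩
    linarith [ih.2]

theorem measureReal_lt_abs_le_integral_rpow_div [IsFiniteMeasure μ] {f : Ω → ℝ} {a r : ℝ}
    (ha : 0 < a) (hr : 0 < r) (hf : Integrable (fun ω ↦ |f ω| ^ r) μ) :
    μ.real {ω | a < |f ω|} ≤ (∫ ω, |f ω| ^ r ∂μ) / a ^ r := by
  have hsub : {ω | a < |f ω|} ⊆ {ω | a ^ r ≤ |f ω| ^ r} := fun ω hω ↦
    rpow_le_rpow ha.le (le_of_lt hω) hr.le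
  rw [le_div_iff₀ (by positivity), mul_comm]
  exact (mul_le_mul_of_nonneg_left (measureReal_mono hsub) (by positivity)).trans
    (mul_meas_ge_le_integral_of_nonneg (ae_of_all _ fun ω ↦ by positivity) hf _)

end Moments

theorem vonBahrEsseen_markov_general
    {Ω : Type*} [MeasurableSpace Ω] (μ : Measure Ω) [IsProbabilityMeasure μ]
    (n : ℕ) (hn : 0 < n) (X : Fin n → Ω → ℝ)
    (hmeas : ∀ i, Measurable (X i))
    (hindep : iIndepFun X μ)
    (hint : ∀ i, Integrable (X i) μ)
    (hmean : ∀ i, ∫ ω, X i ω ∂μ = 0)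
    (r C c : ℝ) (hr1 : 1 ≤ r) (hr2 : r ≤ 2) (hc : 0 < c)
    (hrint : ∀ i, Integrable (fun ω => |X i ω| ^ r) μ)
    (hmom : (1 / (n : ℝ)) * ∑ i, ∫ ω, |X i ω| ^ r ∂μ ≤ C) :
    (μ {ω | c < |∑ i, X i ω| / n}).toReal ≤ 2 * C / (c ^ r * (n : ℝ) ^ (r - 1)) := by
  have hn' : (0 : ℝ) < n := Nat.cast_pos.2 hn
  obtain ⟨hSint, hSle⟩ :=
    integral_abs_sum_rpow_le_two_mul hmeas hindep hint hmean hr1 hr2 hrint Finset.univ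
  have hsum : ∑ i, ∫ ω, |X i ω| ^ r ∂μ ≤ C * n := by
    rwa [one_div, inv_mul_le_iff₀ hn', mul_comm] at hmom
  have hset : {ω | c < |∑ i, X i ω| / n} = {ω | c * n < |∑ i, X i ω|} := by
    ext ω; simp [lt_div_iff₀ hn']
  calc (μ {ω | c < |∑ i, X i ω| / n}).toReal
      = μ.real {ω | c * n < |∑ i, X i ω|} := by rw [hset, measureReal_def]
    _ ≤ (∫ ω, |∑ i, X i ω| ^ r ∂μ) / (c * n) ^ r :=
        measureReal_lt_abs_le_integral_rpow_div (by positivity) (by linarith) hSint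
    _ ≤ 2 * (C * n) / (c * n) ^ r := by gcongr; linarith
    _ = 2 * C / (c ^ r * (n : ℝ) ^ (r - 1)) := by
        rw [mul_rpow hc.le hn'.le, rpow_eq_mul_rpow_sub_one hn'.le hr1]
        field_simp

/-- Von Bahr–Esseen + Markov: if `X₁,…,Xₙ` are independent, mean zero, `1 ≤ r ≤ 2`,
and `(1/n)∑ E|Xᵢ|^r ≤ C`, then `P(|∑ Xᵢ|/n > c) ≤ 2C/(c^r n^{r−1})`. -/
theorem vonBahrEsseen_markov
    {Ω : Type*} [MeasurableSpace Ω] (μ : Measure Ω) [IsProbabilityMeasure μ]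
    (n : ℕ) (hn : 0 < n) (X : Fin n → Ω → ℝ)
    (hmeas : ∀ i, Measurable (X i))
    (hindep : iIndepFun X μ)
    (hint : ∀ i, Integrable (X i) μ)
    (hmean : ∀ i, ∫ ω, X i ω ∂μ = 0)
    (r C c : ℝ) (hr1 : 1 ≤ r) (hr2 : r ≤ 2) (hC : 0 < C) (hc : 0 < c)
    (hrint : ∀ i, Integrable (fun ω => |X i ω| ^ r) μ)
    (hmom : (1 / (n : ℝ)) * ∑ i, ∫ ω, |X i ω| ^ r ∂μ ≤ C) :
    (μ {ω | c < |∑ i, X i ω| / n}).toReal ≤ 2 * C / (c ^ r * (n : ℝ) ^ (r - 1)) :=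
  vonBahrEsseen_markov_general μ n hn X hmeas hindep hint hmean r C c hr1 hr2 hc hrint hmom
end

section
/- (Deterministic Lasso prediction rate.) Consider data (d_i, f_i), i=1,…,n, with d_i = f_i'β₀ + a_i + v_i where ‖β₀‖₀ ≤ s with support T, and the approximation error satisfies ((1/n)∑ a_i²)^{1/2} ≤ c_s. Let Q̂(β) = (1/n)∑(d_i − f_i'β)², let Υ⁰ be a diagonal matrix with positive entries, S = 2(Υ⁰)^{−1}(1/n)∑ f_i v_i the score vector, and let β̂ minimize Q̂(β) + (λ/n)‖Υβ‖₁ where ℓΥ⁰ ≤ Υ ≤ uΥ⁰ entrywise with u ≥ 1 ≥ ℓ > 1/c for some c > 1. If λ/n ≥ c‖S‖_∞, then ‖f_i'(β̂ − β₀)‖_{2,n} ≤ (u + 1/c)·λ√s/(n κ) + 2c_s, where κ is the weighted restricted eigenvalue κ_{c₀} with c₀ = (uc+1)/(ℓc−1), defined by κ_{c₀} = min over δ ≠ 0 with ‖(Υ⁰δ)_{T^c}‖₁ ≤ c₀‖(Υ⁰δ)_T‖₁ of √s ‖f_i'δ‖_{2,n}/‖(Υ⁰δ)_T‖₁ (assumed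 strictly positive). -/
/-- Empirical prediction norm `‖Fδ‖_{2,n} = ((1/n)∑ᵢ (fᵢ'δ)²)^{1/2}`. -/
noncomputable def predNorm (n p : ℕ) (F : Matrix (Fin n) (Fin p) ℝ)
    (δ : Fin p → ℝ) : ℝ :=
  Real.sqrt ((1 / (n : ℝ)) * ∑ i, (∑ j, F i j * δ j) ^ 2)

/-!
Compare `β̂` with `β₀` in the Lasso objective and write `δ = β̂ - β₀`. In the resulting basic
inequality, Cauchy–Schwarz bounds the approximation-error term by `c_s ‖Fδ‖_{2,n}`, the choice
`λ/n ≥ c‖S‖_∞` bounds the score term by `(λ/(cn)) ‖Υ⁰δ‖₁`, and the loadings bound the penalty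
difference by `(λ/n)(u‖(Υ⁰δ)_T‖₁ - ℓ‖(Υ⁰δ)_{Tᶜ}‖₁)`. Hence
`‖Fδ‖² ≤ 2c_s‖Fδ‖ + (λ/n)((u + 1/c)‖(Υ⁰δ)_T‖₁ - (ℓ - 1/c)‖(Υ⁰δ)_{Tᶜ}‖₁)`.
Since `(ℓ - 1/c) c₀ = u + 1/c`, either `δ` lies in the cone `‖(Υ⁰δ)_{Tᶜ}‖₁ ≤ c₀‖(Υ⁰δ)_T‖₁`, where
`κ ‖(Υ⁰δ)_T‖₁ ≤ √s ‖Fδ‖`, or the bracket is negative. Either way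
`‖Fδ‖² ≤ (2c_s + (u + 1/c)λ√s/(nκ)) ‖Fδ‖`.
-/

open Finset Matrix

section LeastSquares

variable {ι J : Type*} [Fintype ι] [Fintype J]

theorem mul_sum_mul_le_sqrt_mul_sqrt {w : ℝ} (hw : 0 ≤ w) (x y : ι → ℝ) :
    w * ∑ i, x i * y i ≤ √(w * ∑ i, x i ^ 2) * √(w * ∑ i, y i ^ 2) := by
  rw [Real.sqrt_mul hw, Real.sqrt_mul hw,
    mul_mul_mul_comm, Real.mul_self_sqrt hw]
  exact mul_le_mul_of_nonneg_left (Real.sum_mul_le_sqrt_mul_sqrt _ x y) hw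

theorem lasso_basic_inequality_s6 (X : Matrix ι J ℝ) (P : (J → ℝ) → ℝ) (w : ℝ)
    (y ε : ι → ℝ) (β β' : J → ℝ) (hy : ∀ i, y i = (X *ᵥ β) i + ε i)
    (hopt : w * ∑ i, (y i - (X *ᵥ β') i) ^ 2 + P β' ≤ w * ∑ i, (y i - (X *ᵥ β) i) ^ 2 + P β) :
    w * ∑ i, (X *ᵥ (β' - β)) i ^ 2
      ≤ 2 * (w * ∑ i, ε i * (X *ᵥ (β' - β)) i) + (P β - P β') := by
  have hsq : ∀ i, (y i - (X *ᵥ β') i) ^ 2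
      = ε i ^ 2 - 2 * (ε i * (X *ᵥ (β' - β)) i) + (X *ᵥ (β' - β)) i ^ 2 := by
    intro i; rw [mulVec_sub, Pi.sub_apply, hy]; ring
  have hres : ∀ i, y i - (X *ᵥ β) i = ε i := fun i => by rw [hy]; ring
  simp only [hsq, hres, sum_add_distrib, sum_sub_distrib, ← mul_sum] at hopt
  linarith

theorem two_mul_sum_mul_mulVec_eq (X : Matrix ι J ℝ) (w : ℝ) (v : ι → ℝ)
    (Υ0 S δ : J → ℝ) (hΥ0 : ∀ j, Υ0 j ≠ 0)
    (hS : ∀ j, S j = 2 * (w * ∑ i, X i j * v i) / Υ0 j) :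
    2 * (w * ∑ i, v i * (X *ᵥ δ) i) = ∑ j, S j * (Υ0 j * δ j) := by
  have hswap : ∑ i, v i * (X *ᵥ δ) i = ∑ j, (∑ i, X i j * v i) * δ j := by
    simpa [dotProduct, vecMul, mul_comm] using dotProduct_mulVec v X δ
  rw [hswap, mul_sum, mul_sum]
  refine sum_congr rfl fun j _ => ?_
  rw [hS]
  field_simp [hΥ0 j]

theorem sum_mul_le_mul_sum_abs {S x : J → ℝ} {K : ℝ} (hS : ∀ j, |S j| ≤ K) :
    ∑ j, S j * x j ≤ K * ∑ j, |x j| := by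
  rw [mul_sum]
  exact sum_le_sum fun j _ => (le_abs_self _).trans <| by
    rw [abs_mul]; exact mul_le_mul_of_nonneg_right (hS j) (abs_nonneg _)

theorem weighted_l1_sub_le [DecidableEq J] {β₀ β Υ0 Υ : J → ℝ} {T : Finset J} {ℓ u : ℝ}
    (hT : ∀ j ∉ T, β₀ j = 0) (hΥ0 : ∀ j, 0 ≤ Υ0 j) (hℓ : 0 ≤ ℓ)
    (hload : ∀ j, ℓ * Υ0 j ≤ Υ j ∧ Υ j ≤ u * Υ0 j) :
    ∑ j, Υ j * |β₀ j| - ∑ j, Υ j * |β j|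
      ≤ u * ∑ j ∈ T, |Υ0 j * (β - β₀) j| - ℓ * ∑ j ∈ Tᶜ, |Υ0 j * (β - β₀) j| := by
  have habs : ∀ j, |Υ0 j * (β - β₀) j| = Υ0 j * |β j - β₀ j| := fun j => by
    rw [abs_mul, abs_of_nonneg (hΥ0 j), Pi.sub_apply]
  have hsupp : ∑ j ∈ T, (Υ j * |β₀ j| - Υ j * |β j|) ≤ ∑ j ∈ T, u * |Υ0 j * (β - β₀) j| :=
    sum_le_sum fun j _ => by
      have hΥ : 0 ≤ Υ j := (mul_nonneg hℓ (hΥ0 j)).trans (hload j).1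
      rw [habs, ← mul_assoc, ← mul_sub]
      calc Υ j * (|β₀ j| - |β j|) ≤ Υ j * |β j - β₀ j| :=
            mul_le_mul_of_nonneg_left (abs_sub_comm (β j) _ ▸ abs_sub_abs_le_abs_sub _ _) hΥ
        _ ≤ u * Υ0 j * |β j - β₀ j| := mul_le_mul_of_nonneg_right (hload j).2 (abs_nonneg _)
  have hoff : ∑ j ∈ Tᶜ, (Υ j * |β₀ j| - Υ j * |β j|) ≤ ∑ j ∈ Tᶜ, -(ℓ * |Υ0 j * (β - β₀) j|) :=
    sum_le_sum fun j hj => by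
      rw [habs, hT j (mem_compl.mp hj), abs_zero, sub_zero, mul_zero, zero_sub, neg_le_neg_iff,
        ← mul_assoc]
      exact mul_le_mul_of_nonneg_right (hload j).1 (abs_nonneg _)
  rw [← sum_add_sum_compl T, ← sum_add_sum_compl T (fun j => Υ j * |β j|)]
  rw [sum_sub_distrib, ← mul_sum] at hsupp
  rw [sum_sub_distrib, sum_neg_distrib, ← mul_sum] at hoff
  linarith

end LeastSquares

theorem mul_sub_mul_le_of_cone {k₁ k₂ c0 A B r κ : ℝ} (hk₁ : 0 ≤ k₁) (hk₂ : 0 < k₂)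
    (hc0 : k₂ * c0 = k₁) (hB : 0 ≤ B) (hr : 0 ≤ r) (hκ : 0 < κ)
    (hcone : B ≤ c0 * A → κ * A ≤ r) :
    k₁ * A - k₂ * B ≤ k₁ * (r / κ) := by
  by_cases h : B ≤ c0 * A
  · have hA : A ≤ r / κ := by rw [le_div_iff₀ hκ, mul_comm]; exact hcone h
    nlinarith
  · have hneg : k₂ * (c0 * A) < k₂ * B := mul_lt_mul_of_pos_left (not_le.mp h) hk₂
    calc k₁ * A - k₂ * B = k₂ * (c0 * A) - k₂ * B := by rw [← hc0]; ring
      _ ≤ 0 := by linarith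
      _ ≤ k₁ * (r / κ) := by positivity

theorem le_of_sq_le_mul {t b : ℝ} (hb : 0 ≤ b) (h : t ^ 2 ≤ b * t) : t ≤ b := by
  nlinarith

noncomputable def restrictedEigenvalue (n p s : ℕ) (f : Matrix (Fin n) (Fin p) ℝ)
    (Υ0 : Fin p → ℝ) (T : Finset (Fin p)) (c0 : ℝ) : ℝ :=
  sInf {r : ℝ | ∃ δ : Fin p → ℝ, δ ≠ 0 ∧
    (∑ j ∈ Tᶜ, |Υ0 j * δ j|) ≤ c0 * ∑ j ∈ T, |Υ0 j * δ j| ∧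
    r = Real.sqrt s * predNorm n p f δ / ∑ j ∈ T, |Υ0 j * δ j|}

section RestrictedEigenvalue

variable {n p s : ℕ} (f : Matrix (Fin n) (Fin p) ℝ) (Υ0 : Fin p → ℝ) (T : Finset (Fin p))
  (c0 : ℝ)

theorem predNorm_nonneg (δ : Fin p → ℝ) : 0 ≤ predNorm n p f δ :=
  Real.sqrt_nonneg _

theorem predNorm_sq (δ : Fin p → ℝ) :
    predNorm n p f δ ^ 2 = 1 / n * ∑ i, (f *ᵥ δ) i ^ 2 :=
  Real.sq_sqrt (by positivity)

theorem restrictedEigenvalue_of_isEmpty [IsEmpty (Fin p)] :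
    restrictedEigenvalue n p s f Υ0 T c0 = 0 := by
  have hempty : ∀ δ : Fin p → ℝ, δ = 0 := fun δ => Subsingleton.elim _ _
  simp [restrictedEigenvalue, hempty, Real.sInf_empty]

theorem restrictedEigenvalue_mul_le {δ : Fin p → ℝ}
    (hδ : ∑ j ∈ Tᶜ, |Υ0 j * δ j| ≤ c0 * ∑ j ∈ T, |Υ0 j * δ j|) :
    restrictedEigenvalue n p s f Υ0 T c0 * ∑ j ∈ T, |Υ0 j * δ j|
      ≤ √s * predNorm n p f δ := by
  have hA0 : 0 ≤ ∑ j ∈ T, |Υ0 j * δ j| := sum_nonneg fun j _ => abs_nonneg _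
  rcases hA0.eq_or_lt with hA | hA
  · rw [← hA, mul_zero]
    exact mul_nonneg (Real.sqrt_nonneg _) (predNorm_nonneg f _)
  have hδ0 : δ ≠ 0 := by rintro rfl; simp at hA
  rw [← le_div_iff₀ hA]
  refine csInf_le ⟨0, ?_⟩ ⟨δ, hδ0, hδ, rfl⟩
  rintro r ⟨δ', -, -, rfl⟩
  exact div_nonneg (mul_nonneg (Real.sqrt_nonneg _) (predNorm_nonneg f _))
    (sum_nonneg fun j _ => abs_nonneg _)

end RestrictedEigenvalue

theorem lasso_key_inequality {n p : ℕ} (f : Matrix (Fin n) (Fin p) ℝ) (β₀ βhat : Fin p → ℝ)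
    (T : Finset (Fin p)) (hT : ∀ j ∉ T, β₀ j = 0) (d a v : Fin n → ℝ)
    (hmodel : ∀ i, d i = (f *ᵥ β₀) i + (a + v) i) (Υ0 Υ S : Fin p → ℝ) (hΥ0 : ∀ j, 0 < Υ0 j)
    {c ℓ u L : ℝ} (hc : 0 < c) (hℓ : 0 ≤ ℓ) (hL : 0 ≤ L)
    (hload : ∀ j, ℓ * Υ0 j ≤ Υ j ∧ Υ j ≤ u * Υ0 j)
    (hS : ∀ j, S j = 2 * (1 / n * ∑ i, f i j * v i) / Υ0 j) (hSL : ∀ j, c * |S j| ≤ L)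
    (hopt : 1 / n * ∑ i, (d i - (f *ᵥ βhat) i) ^ 2 + L * ∑ j, Υ j * |βhat j|
      ≤ 1 / n * ∑ i, (d i - (f *ᵥ β₀) i) ^ 2 + L * ∑ j, Υ j * |β₀ j|) :
    predNorm n p f (βhat - β₀) ^ 2
      ≤ 2 * √(1 / n * ∑ i, a i ^ 2) * predNorm n p f (βhat - β₀)
        + L * ((u + 1 / c) * ∑ j ∈ T, |Υ0 j * (βhat - β₀) j|
          - (ℓ - 1 / c) * ∑ j ∈ Tᶜ, |Υ0 j * (βhat - β₀) j|) := by
  have hbasic := lasso_basic_inequality_s6 f (fun β => L * ∑ j, Υ j * |β j|) (1 / n) d (a + v)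
    β₀ βhat hmodel hopt
  have hpen := weighted_l1_sub_le (β := βhat) hT (fun j => (hΥ0 j).le) hℓ hload
  set δ := βhat - β₀
  have happrox : 1 / n * ∑ i, a i * (f *ᵥ δ) i ≤ √(1 / n * ∑ i, a i ^ 2) * predNorm n p f δ :=
    mul_sum_mul_le_sqrt_mul_sqrt (by positivity) a (f *ᵥ δ)
  have hscore : 2 * (1 / n * ∑ i, v i * (f *ᵥ δ) i)
      ≤ L / c * (∑ j ∈ T, |Υ0 j * δ j| + ∑ j ∈ Tᶜ, |Υ0 j * δ j|) := by
    rw [two_mul_sum_mul_mulVec_eq f _ v Υ0 S δ (fun j => (hΥ0 j).ne') hS, sum_add_sum_compl]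
    exact sum_mul_le_mul_sum_abs fun j => (le_div_iff₀' hc).mpr (hSL j)
  simp only [Pi.add_apply, add_mul, sum_add_distrib, mul_add] at hbasic
  rw [predNorm_sq]
  linear_combination hbasic + 2 * happrox + hscore + mul_le_mul_of_nonneg_left hpen hL

theorem lasso_prediction_rate_general
    (n p s : ℕ)
    (f : Matrix (Fin n) (Fin p) ℝ)
    (β₀ : Fin p → ℝ) (T : Finset (Fin p))
    (hT : T = Finset.univ.filter (fun j => β₀ j ≠ 0))
    (d a v : Fin n → ℝ)
    (hmodel : ∀ i, d i = (∑ j, f i j * β₀ j) + a i + v i)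
    (cs : ℝ)
    (hcs : Real.sqrt ((1 / (n : ℝ)) * ∑ i, (a i) ^ 2) ≤ cs)
    (Υ0 Υ : Fin p → ℝ) (hΥ0 : ∀ j, 0 < Υ0 j)
    (c ℓ u lam : ℝ) (hc : 1 < c) (hu : 1 ≤ u) (hℓc : 1 / c < ℓ)
    (hload : ∀ j, ℓ * Υ0 j ≤ Υ j ∧ Υ j ≤ u * Υ0 j)
    (S : Fin p → ℝ)
    (hS : ∀ j, S j = 2 * ((1 / (n : ℝ)) * ∑ i, f i j * v i) / Υ0 j)
    (hlam : ∀ j, c * |S j| ≤ lam / n)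
    (βhat : Fin p → ℝ)
    (hopt : ∀ β : Fin p → ℝ,
      (1 / (n : ℝ)) * (∑ i, (d i - ∑ j, f i j * βhat j) ^ 2)
          + (lam / n) * ∑ j, Υ j * |βhat j|
        ≤ (1 / (n : ℝ)) * (∑ i, (d i - ∑ j, f i j * β j) ^ 2)
          + (lam / n) * ∑ j, Υ j * |β j|)
    (c0 κ : ℝ) (hc0 : c0 = (u * c + 1) / (ℓ * c - 1))
    (hκ : κ = sInf {r : ℝ | ∃ δ : Fin p → ℝ, δ ≠ 0 ∧
      (∑ j ∈ Tᶜ, |Υ0 j * δ j|) ≤ c0 * ∑ j ∈ T, |Υ0 j * δ j| ∧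
      r = Real.sqrt s * predNorm n p f δ / ∑ j ∈ T, |Υ0 j * δ j|})
    (hκpos : 0 < κ) :
    predNorm n p f (βhat - β₀)
      ≤ (u + 1 / c) * (lam * Real.sqrt s) / (n * κ) + 2 * cs := by
  have hc' : 0 < c := one_pos.trans hc
  have hκ' : κ = restrictedEigenvalue n p s f Υ0 T c0 := hκ
  -- for `p = 0` the set defining `κ` is empty and `sInf ∅ = 0`
  obtain ⟨j₀⟩ : Nonempty (Fin p) := by
    rcases isEmpty_or_nonempty (Fin p) with hp | hp
    · exact absurd (hκ'.trans (restrictedEigenvalue_of_isEmpty f Υ0 T c0)) hκpos.ne'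
    · exact hp
  have hlam0 : 0 ≤ lam / n := (mul_nonneg hc'.le (abs_nonneg _)).trans (hlam j₀)
  have hkey := lasso_key_inequality f β₀ βhat T (fun j hj => by simpa [hT] using hj) d a v
    (fun i => by rw [hmodel, Pi.add_apply, add_assoc]; rfl) Υ0 Υ S hΥ0 hc'
    ((one_div_pos.mpr hc').trans hℓc).le hlam0 hload hS hlam (hopt β₀)
  have hc0' : (ℓ - 1 / c) * c0 = u + 1 / c := by
    have : ℓ * c - 1 ≠ 0 := by linarith [(div_lt_iff₀ hc').mp hℓc]
    rw [hc0]
    field_simp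
  set t := predNorm n p f (βhat - β₀)
  have hcone := mul_sub_mul_le_of_cone (r := √s * t) (by positivity) (sub_pos.mpr hℓc) hc0'
    (sum_nonneg fun j _ => abs_nonneg _) (mul_nonneg (Real.sqrt_nonneg _) (predNorm_nonneg f _))
    hκpos fun h => hκ' ▸ restrictedEigenvalue_mul_le f Υ0 T c0 h
  calc t ≤ 2 * √(1 / n * ∑ i, a i ^ 2) + lam / n * (u + 1 / c) * (√s / κ) :=
        le_of_sq_le_mul (by positivity)
          (by linear_combination hkey + mul_le_mul_of_nonneg_left hcone hlam0)
    _ ≤ (u + 1 / c) * (lam * √s) / (n * κ) + 2 * cs := by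
        rw [show lam / n * (u + 1 / c) * (√s / κ) = (u + 1 / c) * (lam * √s) / (n * κ) by ring]
        linarith

/-- Deterministic Lasso prediction rate (Lemma 6, first claim): under the model
`dᵢ = fᵢ'β₀ + aᵢ + vᵢ` with `‖β₀‖₀ ≤ s`, approximation error at most `c_s`,
penalty `λ/n ≥ c‖S‖_∞`, and valid penalty loadings `ℓΥ⁰ ≤ Υ ≤ uΥ⁰`, the Lasso
solution satisfies `‖fᵢ'(β̂ − β₀)‖_{2,n} ≤ (u + 1/c)λ√s/(nκ) + 2c_s`. -/
theorem lasso_prediction_rate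
    (n p s : ℕ) (hn : 0 < n)
    (f : Matrix (Fin n) (Fin p) ℝ)
    (β₀ : Fin p → ℝ) (T : Finset (Fin p))
    (hT : T = Finset.univ.filter (fun j => β₀ j ≠ 0)) (hTs : T.card ≤ s)
    (d a v : Fin n → ℝ)
    (hmodel : ∀ i, d i = (∑ j, f i j * β₀ j) + a i + v i)
    (cs : ℝ) (hcs0 : 0 ≤ cs)
    (hcs : Real.sqrt ((1 / (n : ℝ)) * ∑ i, (a i) ^ 2) ≤ cs)
    (Υ0 Υ : Fin p → ℝ) (hΥ0 : ∀ j, 0 < Υ0 j)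
    (c ℓ u lam : ℝ) (hc : 1 < c) (hu : 1 ≤ u) (hℓ1 : ℓ ≤ 1) (hℓc : 1 / c < ℓ)
    (hload : ∀ j, ℓ * Υ0 j ≤ Υ j ∧ Υ j ≤ u * Υ0 j)
    (S : Fin p → ℝ)
    (hS : ∀ j, S j = 2 * ((1 / (n : ℝ)) * ∑ i, f i j * v i) / Υ0 j)
    (hlam : ∀ j, c * |S j| ≤ lam / n)
    (βhat : Fin p → ℝ)
    (hopt : ∀ β : Fin p → ℝ,
      (1 / (n : ℝ)) * (∑ i, (d i - ∑ j, f i j * βhat j) ^ 2)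
          + (lam / n) * ∑ j, Υ j * |βhat j|
        ≤ (1 / (n : ℝ)) * (∑ i, (d i - ∑ j, f i j * β j) ^ 2)
          + (lam / n) * ∑ j, Υ j * |β j|)
    (c0 κ : ℝ) (hc0 : c0 = (u * c + 1) / (ℓ * c - 1))
    (hκ : κ = sInf {r : ℝ | ∃ δ : Fin p → ℝ, δ ≠ 0 ∧
      (∑ j ∈ Tᶜ, |Υ0 j * δ j|) ≤ c0 * ∑ j ∈ T, |Υ0 j * δ j| ∧
      r = Real.sqrt s * predNorm n p f δ / ∑ j ∈ T, |Υ0 j * δ j|})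
    (hκpos : 0 < κ) :
    predNorm n p f (βhat - β₀)
      ≤ (u + 1 / c) * (lam * Real.sqrt s) / (n * κ) + 2 * cs :=
  lasso_prediction_rate_general n p s f β₀ T hT d a v hmodel cs hcs Υ0 Υ hΥ0 c ℓ u lam hc hu hℓc
    hload S hS hlam βhat hopt c0 κ hc0 hκ hκpos
end

section
/- (Basic inequality for Lasso.) In the setup d_i = f_i'β₀ + a_i + v_i with ((1/n)∑ a_i²)^{1/2} ≤ c_s, let δ = β̂ − β₀ where β̂ minimizes Q̂(β) + (λ/n)‖Υβ‖₁, Q̂(β) = (1/n)∑(d_i − f_i'β)². If λ/n ≥ c‖S‖_∞ with S = 2(Υ⁰)^{−1}(1/n)∑ f_i v_i, and ℓΥ⁰ ≤ Υ ≤ uΥ⁰ entrywise, then ‖f_i'δ‖_{2,n}² ≤ (u + 1/c)(λ/n)‖(Υ⁰δ)_T‖₁ − (ℓ − 1/c)(λ/n)‖(Υ⁰δ)_{T^c}‖₁ + 2c_s‖f_i'δ‖_{2,n}. -/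
/-- Basic inequality for Lasso: for `δ = β̂ − β₀`,
`‖fᵢ'δ‖²_{2,n} ≤ (u + 1/c)(λ/n)‖(Υ⁰δ)_T‖₁ − (ℓ − 1/c)(λ/n)‖(Υ⁰δ)_{Tᶜ}‖₁
 + 2c_s‖fᵢ'δ‖_{2,n}`. -/
theorem lasso_basic_inequality
    (n p s : ℕ) (hn : 0 < n)
    (f : Matrix (Fin n) (Fin p) ℝ)
    (β₀ : Fin p → ℝ) (T : Finset (Fin p))
    (hT : T = Finset.univ.filter (fun j => β₀ j ≠ 0)) (hTs : T.card ≤ s)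
    (d a v : Fin n → ℝ)
    (hmodel : ∀ i, d i = (∑ j, f i j * β₀ j) + a i + v i)
    (cs : ℝ) (hcs0 : 0 ≤ cs)
    (hcs : Real.sqrt ((1 / (n : ℝ)) * ∑ i, (a i) ^ 2) ≤ cs)
    (Υ0 Υ : Fin p → ℝ) (hΥ0 : ∀ j, 0 < Υ0 j)
    (c ℓ u lam : ℝ) (hc : 1 < c) (hu : 1 ≤ u) (hℓ1 : ℓ ≤ 1) (hℓc : 1 / c < ℓ)
    (hload : ∀ j, ℓ * Υ0 j ≤ Υ j ∧ Υ j ≤ u * Υ0 j)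
    (S : Fin p → ℝ)
    (hS : ∀ j, S j = 2 * ((1 / (n : ℝ)) * ∑ i, f i j * v i) / Υ0 j)
    (hlam : ∀ j, c * |S j| ≤ lam / n)
    (βhat : Fin p → ℝ)
    (hopt : ∀ β : Fin p → ℝ,
      (1 / (n : ℝ)) * (∑ i, (d i - ∑ j, f i j * βhat j) ^ 2)
          + (lam / n) * ∑ j, Υ j * |βhat j|
        ≤ (1 / (n : ℝ)) * (∑ i, (d i - ∑ j, f i j * β j) ^ 2)
          + (lam / n) * ∑ j, Υ j * |β j|)
    (δ : Fin p → ℝ) (hδ : δ = βhat - β₀) :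
    (predNorm n p f δ) ^ 2
      ≤ (u + 1 / c) * (lam / n) * (∑ j ∈ T, |Υ0 j * δ j|)
        - (ℓ - 1 / c) * (lam / n) * (∑ j ∈ Tᶜ, |Υ0 j * δ j|)
        + 2 * cs * predNorm n p f δ := by
  classical
  have hn' : (0:ℝ) < n := by exact_mod_cast hn
  set N : ℝ := 1 / (n:ℝ) with hNdef
  have hNpos : 0 < N := by positivity
  set L : ℝ := lam / n with hLdef
  set Fδ : Fin n → ℝ := fun i => ∑ j, f i j * δ j with hFδ
  have hβhat : ∀ j, βhat j = β₀ j + δ j := by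
    intro j
    have := congrFun hδ j
    simp only [Pi.sub_apply] at this
    linarith
  have hres : ∀ i, d i - ∑ j, f i j * βhat j = (a i + v i) - Fδ i := by
    intro i
    have h1 : ∑ j, f i j * βhat j = (∑ j, f i j * β₀ j) + Fδ i := by
      rw [hFδ, ← Finset.sum_add_distrib]
      exact Finset.sum_congr rfl fun j _ => by rw [hβhat j]; ring
    rw [hmodel i, h1]; ring
  have hres0 : ∀ i, d i - ∑ j, f i j * β₀ j = a i + v i := by
    intro i; rw [hmodel i]; ring
  -- optimality at β₀
  have key : N * (∑ i, ((a i + v i) - Fδ i) ^ 2) + L * ∑ j, Υ j * |βhat j|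
      ≤ N * (∑ i, (a i + v i) ^ 2) + L * ∑ j, Υ j * |β₀ j| := by
    have h := hopt β₀
    have e1 : ∑ i, (d i - ∑ j, f i j * βhat j) ^ 2
        = ∑ i, ((a i + v i) - Fδ i) ^ 2 :=
      Finset.sum_congr rfl fun i _ => by rw [hres i]
    have e2 : ∑ i, (d i - ∑ j, f i j * β₀ j) ^ 2
        = ∑ i, (a i + v i) ^ 2 :=
      Finset.sum_congr rfl fun i _ => by rw [hres0 i]
    rw [e1, e2] at h
    exact h
  have expand : ∑ i, ((a i + v i) - Fδ i) ^ 2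
      = ∑ i, (a i + v i) ^ 2 - 2 * ∑ i, (a i + v i) * Fδ i + ∑ i, (Fδ i) ^ 2 := by
    rw [Finset.mul_sum, ← Finset.sum_sub_distrib, ← Finset.sum_add_distrib]
    exact Finset.sum_congr rfl fun i _ => by ring
  have hsplit : ∑ i, (a i + v i) * Fδ i = ∑ i, a i * Fδ i + ∑ i, v i * Fδ i := by
    rw [← Finset.sum_add_distrib]
    exact Finset.sum_congr rfl fun i _ => by ring
  have main : N * ∑ i, (Fδ i) ^ 2
      ≤ L * (∑ j, Υ j * |β₀ j|) - L * (∑ j, Υ j * |βhat j|)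
        + 2 * (N * ∑ i, a i * Fδ i) + 2 * (N * ∑ i, v i * Fδ i) := by
    have hr : N * (∑ i, (a i + v i) ^ 2
          - 2 * (∑ i, a i * Fδ i + ∑ i, v i * Fδ i) + ∑ i, (Fδ i) ^ 2)
        = N * ∑ i, (a i + v i) ^ 2 - 2 * (N * ∑ i, a i * Fδ i)
          - 2 * (N * ∑ i, v i * Fδ i) + N * ∑ i, (Fδ i) ^ 2 := by ring
    rw [expand, hsplit] at key
    linarith [key, hr]
  -- Cauchy-Schwarz bound for the approximation error term
  have pred_eq : predNorm n p f δ = Real.sqrt (N * ∑ i, (Fδ i) ^ 2) := rfl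
  have pred_nonneg : 0 ≤ predNorm n p f δ := Real.sqrt_nonneg _
  have hB : 2 * (N * ∑ i, a i * Fδ i) ≤ 2 * cs * predNorm n p f δ := by
    have hCS : (∑ i, a i * Fδ i) ^ 2 ≤ (∑ i, (a i) ^ 2) * ∑ i, (Fδ i) ^ 2 :=
      Finset.sum_mul_sq_le_sq_mul_sq _ _ _
    have ha2 : (0:ℝ) ≤ ∑ i, (a i) ^ 2 := Finset.sum_nonneg fun i _ => sq_nonneg _
    have hf2 : (0:ℝ) ≤ ∑ i, (Fδ i) ^ 2 := Finset.sum_nonneg fun i _ => sq_nonneg _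
    have h1 : ∑ i, a i * Fδ i ≤ Real.sqrt (∑ i, (a i) ^ 2) * Real.sqrt (∑ i, (Fδ i) ^ 2) := by
      calc ∑ i, a i * Fδ i ≤ |∑ i, a i * Fδ i| := le_abs_self _
        _ = Real.sqrt ((∑ i, a i * Fδ i) ^ 2) := (Real.sqrt_sq_eq_abs _).symm
        _ ≤ Real.sqrt ((∑ i, (a i) ^ 2) * ∑ i, (Fδ i) ^ 2) := Real.sqrt_le_sqrt hCS
        _ = Real.sqrt (∑ i, (a i) ^ 2) * Real.sqrt (∑ i, (Fδ i) ^ 2) := Real.sqrt_mul ha2 _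
    have h2 : N * ∑ i, a i * Fδ i
        ≤ Real.sqrt (N * ∑ i, (a i) ^ 2) * Real.sqrt (N * ∑ i, (Fδ i) ^ 2) := by
      rw [Real.sqrt_mul hNpos.le, Real.sqrt_mul hNpos.le]
      have : Real.sqrt N * Real.sqrt (∑ i, (a i) ^ 2)
          * (Real.sqrt N * Real.sqrt (∑ i, (Fδ i) ^ 2))
          = (Real.sqrt N * Real.sqrt N)
            * (Real.sqrt (∑ i, (a i) ^ 2) * Real.sqrt (∑ i, (Fδ i) ^ 2)) := by ring
      rw [this, Real.mul_self_sqrt hNpos.le]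
      exact mul_le_mul_of_nonneg_left h1 hNpos.le
    have h3 : Real.sqrt (N * ∑ i, (a i) ^ 2) * Real.sqrt (N * ∑ i, (Fδ i) ^ 2)
        ≤ cs * predNorm n p f δ := by
      rw [pred_eq]
      exact mul_le_mul_of_nonneg_right hcs (Real.sqrt_nonneg _)
    linarith
  -- noise term bound
  have hLc : ∀ j, |S j| ≤ L / c := by
    intro j
    have h := hlam j
    have hc0 : (0:ℝ) < c := lt_trans one_pos hc
    rw [hLdef]
    rw [le_div_iff₀ hc0]
    linarith [h]
  have hA : 2 * (N * ∑ i, v i * Fδ i)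
      ≤ (1 / c) * L * ((∑ j ∈ T, |Υ0 j * δ j|) + ∑ j ∈ Tᶜ, |Υ0 j * δ j|) := by
    have swap : ∑ i, v i * Fδ i = ∑ j, δ j * ∑ i, f i j * v i := by
      simp only [hFδ, Finset.mul_sum]
      rw [Finset.sum_comm]
      refine Finset.sum_congr rfl fun j _ => ?_
      exact Finset.sum_congr rfl fun i _ => by ring
    have hSj : ∀ j, S j * Υ0 j = 2 * (N * ∑ i, f i j * v i) := by
      intro j
      rw [hS j]
      exact div_mul_cancel₀ _ (hΥ0 j).ne'
    have hterm : ∀ j, 2 * (N * (δ j * ∑ i, f i j * v i)) ≤ (1 / c) * L * |Υ0 j * δ j| := by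
      intro j
      have h1 : 2 * (N * (δ j * ∑ i, f i j * v i)) = δ j * (S j * Υ0 j) := by
        rw [hSj j]; ring
      have h2 : δ j * (S j * Υ0 j) ≤ |S j| * |Υ0 j * δ j| := by
        calc δ j * (S j * Υ0 j) ≤ |δ j * (S j * Υ0 j)| := le_abs_self _
          _ = |S j| * |Υ0 j * δ j| := by rw [abs_mul, abs_mul, abs_mul]; ring
      have h3 : |S j| * |Υ0 j * δ j| ≤ (L / c) * |Υ0 j * δ j| :=
        mul_le_mul_of_nonneg_right (hLc j) (abs_nonneg _)
      rw [h1]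
      calc δ j * (S j * Υ0 j) ≤ (L / c) * |Υ0 j * δ j| := le_trans h2 h3
        _ = (1 / c) * L * |Υ0 j * δ j| := by ring
    have hsum : 2 * (N * ∑ i, v i * Fδ i)
        ≤ ∑ j, (1 / c) * L * |Υ0 j * δ j| := by
      rw [swap, Finset.mul_sum, Finset.mul_sum]
      exact Finset.sum_le_sum fun j _ => hterm j
    have hcompl : (∑ j, (1 / c) * L * |Υ0 j * δ j|)
        = (1 / c) * L * ((∑ j ∈ T, |Υ0 j * δ j|) + ∑ j ∈ Tᶜ, |Υ0 j * δ j|) := by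
      rw [Finset.sum_add_sum_compl T (fun j => |Υ0 j * δ j|), Finset.mul_sum]
    linarith [hsum, hcompl.le, hcompl.ge]
  -- penalty term bound
  have hL0 : ∀ _j : Fin p, 0 ≤ L := by
    intro j
    have hc0 : (0:ℝ) < c := lt_trans one_pos hc
    have := hlam j
    have : 0 ≤ c * |S j| := mul_nonneg hc0.le (abs_nonneg _)
    rw [hLdef]
    linarith [hlam j]
  have hC : L * (∑ j, Υ j * |β₀ j|) - L * (∑ j, Υ j * |βhat j|)
      ≤ L * u * (∑ j ∈ T, |Υ0 j * δ j|) - L * ℓ * (∑ j ∈ Tᶜ, |Υ0 j * δ j|) := by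
    have hdiff : L * (∑ j, Υ j * |β₀ j|) - L * (∑ j, Υ j * |βhat j|)
        = ∑ j, L * (Υ j * (|β₀ j| - |βhat j|)) := by
      rw [Finset.mul_sum, Finset.mul_sum, ← Finset.sum_sub_distrib]
      exact Finset.sum_congr rfl fun j _ => by ring
    have habs : ∀ j, |Υ0 j * δ j| = Υ0 j * |δ j| := by
      intro j
      rw [abs_mul, abs_of_pos (hΥ0 j)]
    have hsplit2 : ∑ j, L * (Υ j * (|β₀ j| - |βhat j|))
        = (∑ j ∈ T, L * (Υ j * (|β₀ j| - |βhat j|)))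
          + ∑ j ∈ Tᶜ, L * (Υ j * (|β₀ j| - |βhat j|)) :=
      (Finset.sum_add_sum_compl T _).symm
    have hTb : ∀ j ∈ T, L * (Υ j * (|β₀ j| - |βhat j|)) ≤ L * u * |Υ0 j * δ j| := by
      intro j _
      have hΥpos : 0 ≤ Υ j := by
        have h2 : 0 < ℓ := lt_trans (by positivity : (0:ℝ) < 1 / c) hℓc
        have h3 := mul_pos h2 (hΥ0 j)
        linarith [(hload j).1]
      have h1 : |β₀ j| - |βhat j| ≤ |δ j| := by
        have := abs_sub_abs_le_abs_sub (β₀ j) (βhat j)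
        have he : |β₀ j - βhat j| = |δ j| := by
          rw [hβhat j]
          rw [show β₀ j - (β₀ j + δ j) = -δ j by ring, abs_neg]
        linarith [this, he.le, he.ge]
      have h2 : Υ j * (|β₀ j| - |βhat j|) ≤ Υ j * |δ j| :=
        mul_le_mul_of_nonneg_left h1 hΥpos
      have h3 : Υ j * |δ j| ≤ u * Υ0 j * |δ j| :=
        mul_le_mul_of_nonneg_right (hload j).2 (abs_nonneg _)
      have h4 : Υ j * (|β₀ j| - |βhat j|) ≤ u * |Υ0 j * δ j| := by
        rw [habs j]
        have e : u * (Υ0 j * |δ j|) = u * Υ0 j * |δ j| := by ring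
        linarith [h2, h3, e.le, e.ge]
      calc L * (Υ j * (|β₀ j| - |βhat j|)) ≤ L * (u * |Υ0 j * δ j|) :=
            mul_le_mul_of_nonneg_left h4 (hL0 j)
        _ = L * u * |Υ0 j * δ j| := by ring
    have hTcb : ∀ j ∈ Tᶜ, L * (Υ j * (|β₀ j| - |βhat j|)) ≤ -(L * ℓ * |Υ0 j * δ j|) := by
      intro j hj
      have hj0 : β₀ j = 0 := by
        by_contra h
        have : j ∈ T := by
          rw [hT]; simp [h]
        exact (Finset.mem_compl.mp hj) this
      have hδj : |βhat j| = |δ j| := by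
        rw [hβhat j, hj0, zero_add]
      have hΥl := (hload j).1
      have hL := hL0 j
      rw [hj0, abs_zero, hδj, habs j]
      have h5 : ℓ * Υ0 j * |δ j| ≤ Υ j * |δ j| :=
        mul_le_mul_of_nonneg_right hΥl (abs_nonneg _)
      have h6 := mul_le_mul_of_nonneg_left h5 hL
      have e1 : L * (Υ j * (0 - |δ j|)) = -(L * (Υ j * |δ j|)) := by ring
      have e2 : -(L * ℓ * (Υ0 j * |δ j|)) = -(L * (ℓ * Υ0 j * |δ j|)) := by ring
      rw [e1, e2]
      exact neg_le_neg h6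
    rw [hdiff, hsplit2]
    have hc1 : (∑ j ∈ T, L * (Υ j * (|β₀ j| - |βhat j|)))
        ≤ L * u * ∑ j ∈ T, |Υ0 j * δ j| := by
      calc (∑ j ∈ T, L * (Υ j * (|β₀ j| - |βhat j|)))
          ≤ ∑ j ∈ T, L * u * |Υ0 j * δ j| := Finset.sum_le_sum hTb
        _ = L * u * ∑ j ∈ T, |Υ0 j * δ j| := (Finset.mul_sum _ _ _).symm
    have hc2 : (∑ j ∈ Tᶜ, L * (Υ j * (|β₀ j| - |βhat j|)))
        ≤ ∑ j ∈ Tᶜ, -(L * ℓ * |Υ0 j * δ j|) := Finset.sum_le_sum hTcb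
    have : (∑ j ∈ Tᶜ, -(L * ℓ * |Υ0 j * δ j|)) = -(L * ℓ * ∑ j ∈ Tᶜ, |Υ0 j * δ j|) := by
      rw [Finset.sum_neg_distrib, ← Finset.mul_sum]
    rw [this] at hc2
    linarith
  -- combine
  have hpred2 : (predNorm n p f δ) ^ 2 = N * ∑ i, (Fδ i) ^ 2 := by
    rw [pred_eq, Real.sq_sqrt]
    exact mul_nonneg hNpos.le (Finset.sum_nonneg fun i _ => sq_nonneg _)
  rw [hpred2]
  have hfinal : L * u * (∑ j ∈ T, |Υ0 j * δ j|) - L * ℓ * (∑ j ∈ Tᶜ, |Υ0 j * δ j|)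
      + (1 / c) * L * ((∑ j ∈ T, |Υ0 j * δ j|) + ∑ j ∈ Tᶜ, |Υ0 j * δ j|)
      = (u + 1 / c) * L * (∑ j ∈ T, |Υ0 j * δ j|)
        - (ℓ - 1 / c) * L * (∑ j ∈ Tᶜ, |Υ0 j * δ j|) := by ring
  linarith [main, hA, hB, hC]
end

section
/- (ℓ1 bound outside the restricted set.) Under the basic Lasso inequality setup, if ‖(Υ⁰δ)_{T^c}‖₁ > 2c₀‖(Υ⁰δ)_T‖₁ with c₀ = (uc+1)/(ℓc−1), then ‖Υ⁰δ‖₁ ≤ (1 + 1/(2c₀)) · (2c/(ℓc−1)) · (n/λ) · c_s², and in particular ‖Υ⁰δ‖₁ ≤ 3c₀ n c_s²/λ. -/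
open Finset

section

variable {ι κ : Type*} [Fintype ι] [Fintype κ]

lemma two_mul_weighted_sum_mul_le {w σ : ℝ} (hw : 0 ≤ w) {x y : ι → ℝ}
    (hx : √(w * ∑ i, x i ^ 2) ≤ σ) :
    2 * (w * ∑ i, x i * y i) ≤ σ ^ 2 + w * ∑ i, y i ^ 2 := by
  have hσt : w * ∑ i, x i * y i ≤ σ * √(w * ∑ i, y i ^ 2) := calc
    w * ∑ i, x i * y i ≤ w * (√(∑ i, x i ^ 2) * √(∑ i, y i ^ 2)) :=
      mul_le_mul_of_nonneg_left (Real.sum_mul_le_sqrt_mul_sqrt _ _ _) hw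
    _ = √(w * ∑ i, x i ^ 2) * √(w * ∑ i, y i ^ 2) := by
      rw [Real.sqrt_mul hw, Real.sqrt_mul hw, mul_mul_mul_comm, Real.mul_self_sqrt hw]
    _ ≤ σ * √(w * ∑ i, y i ^ 2) := mul_le_mul_of_nonneg_right hx (Real.sqrt_nonneg _)
  have ht : √(w * ∑ i, y i ^ 2) ^ 2 = w * ∑ i, y i ^ 2 := Real.sq_sqrt (by positivity)
  nlinarith [sq_nonneg (σ - √(w * ∑ i, y i ^ 2))]

lemma mul_sum_sq_le_of_mul_sum_sub_sq_add_le {K P₀ P₁ : ℝ} {r y : ι → ℝ}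
    (h : K * ∑ i, (r i - y i) ^ 2 + P₁ ≤ K * ∑ i, r i ^ 2 + P₀) :
    K * ∑ i, y i ^ 2 ≤ 2 * (K * ∑ i, r i * y i) + (P₀ - P₁) := by
  have hexpand : K * ∑ i, (r i - y i) ^ 2
      = K * ∑ i, r i ^ 2 - 2 * (K * ∑ i, r i * y i) + K * ∑ i, y i ^ 2 := by
    have hsq : ∀ i, (r i - y i) ^ 2 = r i ^ 2 - 2 * (r i * y i) + y i ^ 2 := fun i => by ring
    simp only [hsq, sum_add_distrib, sum_sub_distrib, ← mul_sum]
    ring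
  linarith

lemma lasso_basic_inequality_s10 {K L : ℝ} (f : Matrix ι κ ℝ) (d a v : ι → ℝ)
    (β₀ βhat δ Υ : κ → ℝ) (hδ : δ = βhat - β₀)
    (hmodel : ∀ i, d i = (∑ j, f i j * β₀ j) + a i + v i)
    (hopt : K * (∑ i, (d i - ∑ j, f i j * βhat j) ^ 2) + L * ∑ j, Υ j * |βhat j|
      ≤ K * (∑ i, (d i - ∑ j, f i j * β₀ j) ^ 2) + L * ∑ j, Υ j * |β₀ j|) :
    K * ∑ i, (∑ j, f i j * δ j) ^ 2
      ≤ 2 * (K * ∑ i, a i * ∑ j, f i j * δ j) + 2 * (K * ∑ i, v i * ∑ j, f i j * δ j)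
        + L * (∑ j, Υ j * |β₀ j| - ∑ j, Υ j * |βhat j|) := by
  subst hδ
  have hfit : ∀ i, d i - ∑ j, f i j * βhat j = (a i + v i) - ∑ j, f i j * (βhat - β₀) j := by
    intro i
    simp only [hmodel, Pi.sub_apply, mul_sub, sum_sub_distrib]
    ring
  have hnull : ∀ i, d i - ∑ j, f i j * β₀ j = a i + v i := fun i => by rw [hmodel]; ring
  simp only [hfit, hnull] at hopt
  have h := mul_sum_sq_le_of_mul_sum_sub_sq_add_le hopt
  simp only [add_mul, sum_add_distrib, mul_add] at h
  linarith

lemma two_mul_sum_mul_sum_eq_sum_score_mul (w : ℝ) (f : Matrix ι κ ℝ) (v : ι → ℝ)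
    {Υ0 S : κ → ℝ} (hΥ0 : ∀ j, Υ0 j ≠ 0)
    (hS : ∀ j, S j = 2 * (w * ∑ i, f i j * v i) / Υ0 j) (δ : κ → ℝ) :
    2 * (w * ∑ i, v i * ∑ j, f i j * δ j) = ∑ j, S j * (Υ0 j * δ j) := by
  calc 2 * (w * ∑ i, v i * ∑ j, f i j * δ j) = ∑ j, 2 * (w * ∑ i, f i j * v i) * δ j := by
        simp only [mul_sum, sum_mul]
        rw [sum_comm]
        exact sum_congr rfl fun j _ => sum_congr rfl fun i _ => by ring
    _ = ∑ j, S j * (Υ0 j * δ j) := sum_congr rfl fun j _ => by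
        rw [hS]
        field_simp [hΥ0 j]

lemma mul_sum_mul_le_mul_sum_abs {c L : ℝ} (hc : 0 ≤ c) {S x : κ → ℝ}
    (hS : ∀ j, c * |S j| ≤ L) :
    c * ∑ j, S j * x j ≤ L * ∑ j, |x j| := by
  rw [mul_sum, mul_sum]
  refine sum_le_sum fun j _ => ?_
  calc c * (S j * x j) ≤ c * (|S j| * |x j|) :=
        mul_le_mul_of_nonneg_left (abs_mul (S j) (x j) ▸ le_abs_self _) hc
    _ = c * |S j| * |x j| := (mul_assoc _ _ _).symm
    _ ≤ L * |x j| := mul_le_mul_of_nonneg_right (hS j) (abs_nonneg _)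

lemma sum_mul_abs_sub_sum_mul_abs_le [DecidableEq κ] {T : Finset κ} {β₀ βhat δ Υ Υ0 : κ → ℝ}
    {ℓ u : ℝ} (hℓ : 0 ≤ ℓ) (hΥ0 : ∀ j, 0 ≤ Υ0 j)
    (hload : ∀ j, ℓ * Υ0 j ≤ Υ j ∧ Υ j ≤ u * Υ0 j)
    (hβ₀ : ∀ j ∉ T, β₀ j = 0) (hδ : δ = βhat - β₀) :
    ∑ j, Υ j * |β₀ j| - ∑ j, Υ j * |βhat j|
      ≤ u * ∑ j ∈ T, |Υ0 j * δ j| - ℓ * ∑ j ∈ Tᶜ, |Υ0 j * δ j| := by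
  subst hδ
  have hon : ∑ j ∈ T, Υ j * |β₀ j| - ∑ j ∈ T, Υ j * |βhat j|
      ≤ ∑ j ∈ T, u * |Υ0 j * (βhat - β₀) j| := by
    rw [← sum_sub_distrib]
    refine sum_le_sum fun j _ => ?_
    have hΥ : 0 ≤ Υ j := (mul_nonneg hℓ (hΥ0 j)).trans (hload j).1
    rw [Pi.sub_apply, abs_mul, abs_of_nonneg (hΥ0 j), abs_sub_comm, ← mul_sub, ← mul_assoc]
    calc Υ j * (|β₀ j| - |βhat j|) ≤ Υ j * |β₀ j - βhat j| :=
          mul_le_mul_of_nonneg_left (abs_sub_abs_le_abs_sub _ _) hΥ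
      _ ≤ u * Υ0 j * |β₀ j - βhat j| := mul_le_mul_of_nonneg_right (hload j).2 (abs_nonneg _)
  have hoff : ∑ j ∈ Tᶜ, ℓ * |Υ0 j * (βhat - β₀) j|
      ≤ ∑ j ∈ Tᶜ, Υ j * |βhat j| - ∑ j ∈ Tᶜ, Υ j * |β₀ j| := by
    rw [← sum_sub_distrib]
    refine sum_le_sum fun j hj => ?_
    rw [Pi.sub_apply, hβ₀ j (mem_compl.mp hj), sub_zero, abs_zero, mul_zero, sub_zero, abs_mul,
      abs_of_nonneg (hΥ0 j), ← mul_assoc]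
    exact mul_le_mul_of_nonneg_right (hload j).1 (abs_nonneg _)
  rw [← sum_add_sum_compl T (fun j => Υ j * |β₀ j|),
    ← sum_add_sum_compl T (fun j => Υ j * |βhat j|), mul_sum, mul_sum]
  linarith

end

lemma add_le_of_mul_sub_le_of_two_mul_lt {L κ c0 c σ mT mc : ℝ} (hL : 0 < L) (hκ : 0 < κ)
    (hc0 : 0 < c0) (hout : 2 * c0 * mT < mc)
    (hkey : L * (κ * mc - c0 * κ * mT) ≤ c * σ ^ 2) :
    mT + mc ≤ (1 + 1 / (2 * c0)) * (2 * c / κ) * (1 / L) * σ ^ 2 := by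
  have hmc : mc ≤ 2 * c / κ * (1 / L) * σ ^ 2 := by
    rw [show 2 * c / κ * (1 / L) * σ ^ 2 = 2 * (c * σ ^ 2) / (κ * L) by field_simp,
      le_div_iff₀ (mul_pos hκ hL)]
    nlinarith [mul_lt_mul_of_pos_left hout (mul_pos hκ hL)]
  have hmT : mT ≤ 1 / (2 * c0) * mc := by
    rw [div_mul_eq_mul_div, one_mul, le_div_iff₀ (by positivity)]
    linarith
  calc mT + mc ≤ (1 + 1 / (2 * c0)) * mc := by linarith
    _ ≤ (1 + 1 / (2 * c0)) * (2 * c / κ * (1 / L) * σ ^ 2) :=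
        mul_le_mul_of_nonneg_left hmc (by positivity)
    _ = _ := by ring

lemma one_add_one_div_two_mul_mul_le {c κ c0 : ℝ} (hκ : 0 < κ) (hc0 : 1 ≤ c0)
    (hc : c ≤ c0 * κ) :
    (1 + 1 / (2 * c0)) * (2 * c / κ) ≤ 3 * c0 := by
  have hc0pos : 0 < c0 := one_pos.trans_le hc0
  calc (1 + 1 / (2 * c0)) * (2 * c / κ) ≤ (1 + 1 / (2 * c0)) * (2 * c0) := by
        gcongr
        rw [div_le_iff₀ hκ]
        linarith
    _ = 2 * c0 + 1 := by field_simp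
    _ ≤ 3 * c0 := by linarith

theorem lasso_ell1_outside_restricted_set_general
    (n p : ℕ) (hn : 0 < n)
    (f : Matrix (Fin n) (Fin p) ℝ)
    (β₀ : Fin p → ℝ) (T : Finset (Fin p))
    (hT : T = Finset.univ.filter (fun j => β₀ j ≠ 0))
    (d a v : Fin n → ℝ)
    (hmodel : ∀ i, d i = (∑ j, f i j * β₀ j) + a i + v i)
    (cs : ℝ)
    (hcs : Real.sqrt ((1 / (n : ℝ)) * ∑ i, (a i) ^ 2) ≤ cs)
    (Υ0 Υ : Fin p → ℝ) (hΥ0 : ∀ j, 0 < Υ0 j)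
    (c ℓ u lam : ℝ) (hc : 1 < c) (hu : 1 ≤ u) (hℓ1 : ℓ ≤ 1) (hℓc : 1 / c < ℓ)
    (hload : ∀ j, ℓ * Υ0 j ≤ Υ j ∧ Υ j ≤ u * Υ0 j)
    (S : Fin p → ℝ)
    (hS : ∀ j, S j = 2 * ((1 / (n : ℝ)) * ∑ i, f i j * v i) / Υ0 j)
    (hlam : ∀ j, c * |S j| ≤ lam / n)
    (βhat : Fin p → ℝ)
    (hopt : ∀ β : Fin p → ℝ,
      (1 / (n : ℝ)) * (∑ i, (d i - ∑ j, f i j * βhat j) ^ 2)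
          + (lam / n) * ∑ j, Υ j * |βhat j|
        ≤ (1 / (n : ℝ)) * (∑ i, (d i - ∑ j, f i j * β j) ^ 2)
          + (lam / n) * ∑ j, Υ j * |β j|)
    (δ : Fin p → ℝ) (hδ : δ = βhat - β₀)
    (c0 : ℝ) (hc0 : c0 = (u * c + 1) / (ℓ * c - 1))
    (hlampos : 0 < lam)
    (hout : 2 * c0 * (∑ j ∈ T, |Υ0 j * δ j|) < ∑ j ∈ Tᶜ, |Υ0 j * δ j|) :
    (∑ j, |Υ0 j * δ j|)
        ≤ (1 + 1 / (2 * c0)) * (2 * c / (ℓ * c - 1)) * ((n : ℝ) / lam) * cs ^ 2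
      ∧ (∑ j, |Υ0 j * δ j|) ≤ 3 * c0 * n * cs ^ 2 / lam := by
  have hcpos : 0 < c := one_pos.trans hc
  have hℓpos : 0 < ℓ := (one_div_pos.mpr hcpos).trans hℓc
  have hκ : 0 < ℓ * c - 1 := by linarith [(div_lt_iff₀ hcpos).mp hℓc]
  have hc0κ : c0 * (ℓ * c - 1) = u * c + 1 := by rw [hc0, div_mul_cancel₀ _ hκ.ne']
  have hc0_one : 1 ≤ c0 := le_of_mul_le_mul_right (by nlinarith) hκ
  have hL : 0 < lam / n := div_pos hlampos (Nat.cast_pos.mpr hn)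
  have hbasic := lasso_basic_inequality_s10 f d a v β₀ βhat δ Υ hδ hmodel (hopt β₀)
  have happrox := two_mul_weighted_sum_mul_le (y := fun i => ∑ j, f i j * δ j)
    (one_div_nonneg.mpr (Nat.cast_nonneg n)) hcs
  have hnoise := mul_sum_mul_le_mul_sum_abs (x := fun j => Υ0 j * δ j) hcpos.le hlam
  rw [← two_mul_sum_mul_sum_eq_sum_score_mul _ f v (fun j => (hΥ0 j).ne') hS] at hnoise
  have hpen := sum_mul_abs_sub_sum_mul_abs_le (T := T) hℓpos.le (fun j => (hΥ0 j).le) hload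
    (fun j hj => by simpa [hT] using hj) hδ
  have hsplit := sum_add_sum_compl T fun j => |Υ0 j * δ j|
  have hkey : lam / n * ((ℓ * c - 1) * ∑ j ∈ Tᶜ, |Υ0 j * δ j|
      - c0 * (ℓ * c - 1) * ∑ j ∈ T, |Υ0 j * δ j|) ≤ c * cs ^ 2 := by
    rw [hc0κ]
    nlinarith [mul_le_mul_of_nonneg_left (add_le_add hbasic happrox) hcpos.le,
      mul_le_mul_of_nonneg_left hpen (mul_pos hcpos hL).le]
  have hm := add_le_of_mul_sub_le_of_two_mul_lt hL hκ (by linarith) hout hkey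
  rw [hsplit, one_div_div] at hm
  refine ⟨hm, hm.trans ?_⟩
  calc _ ≤ 3 * c0 * (n / lam) * cs ^ 2 := by
        gcongr ?_ * _ * _
        exact one_add_one_div_two_mul_mul_le hκ hc0_one (by rw [hc0κ]; nlinarith)
    _ = 3 * c0 * n * cs ^ 2 / lam := by ring

/-- ℓ1 bound outside the restricted set: if `‖(Υ⁰δ)_{Tᶜ}‖₁ > 2c₀‖(Υ⁰δ)_T‖₁`, then
`‖Υ⁰δ‖₁ ≤ (1 + 1/(2c₀))(2c/(ℓc−1))(n/λ)c_s²` and hence `‖Υ⁰δ‖₁ ≤ 3c₀ n c_s²/λ`.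
`‖(Υ⁰δ)_{Tᶜ}‖₁ ≤ c₀‖(Υ⁰δ)_T‖₁` with `c₀ = (uc+1)/(ℓc−1)`. -/
theorem lasso_ell1_outside_restricted_set
    (n p s : ℕ) (hn : 0 < n)
    (f : Matrix (Fin n) (Fin p) ℝ)
    (β₀ : Fin p → ℝ) (T : Finset (Fin p))
    (hT : T = Finset.univ.filter (fun j => β₀ j ≠ 0)) (hTs : T.card ≤ s)
    (d a v : Fin n → ℝ)
    (hmodel : ∀ i, d i = (∑ j, f i j * β₀ j) + a i + v i)
    (cs : ℝ) (hcs0 : 0 ≤ cs)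
    (hcs : Real.sqrt ((1 / (n : ℝ)) * ∑ i, (a i) ^ 2) ≤ cs)
    (Υ0 Υ : Fin p → ℝ) (hΥ0 : ∀ j, 0 < Υ0 j)
    (c ℓ u lam : ℝ) (hc : 1 < c) (hu : 1 ≤ u) (hℓ1 : ℓ ≤ 1) (hℓc : 1 / c < ℓ)
    (hload : ∀ j, ℓ * Υ0 j ≤ Υ j ∧ Υ j ≤ u * Υ0 j)
    (S : Fin p → ℝ)
    (hS : ∀ j, S j = 2 * ((1 / (n : ℝ)) * ∑ i, f i j * v i) / Υ0 j)
    (hlam : ∀ j, c * |S j| ≤ lam / n)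
    (βhat : Fin p → ℝ)
    (hopt : ∀ β : Fin p → ℝ,
      (1 / (n : ℝ)) * (∑ i, (d i - ∑ j, f i j * βhat j) ^ 2)
          + (lam / n) * ∑ j, Υ j * |βhat j|
        ≤ (1 / (n : ℝ)) * (∑ i, (d i - ∑ j, f i j * β j) ^ 2)
          + (lam / n) * ∑ j, Υ j * |β j|)
    (δ : Fin p → ℝ) (hδ : δ = βhat - β₀)
    (c0 : ℝ) (hc0 : c0 = (u * c + 1) / (ℓ * c - 1))
    (hlampos : 0 < lam)
    (hout : 2 * c0 * (∑ j ∈ T, |Υ0 j * δ j|) < ∑ j ∈ Tᶜ, |Υ0 j * δ j|) :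
    (∑ j, |Υ0 j * δ j|)
        ≤ (1 + 1 / (2 * c0)) * (2 * c / (ℓ * c - 1)) * ((n : ℝ) / lam) * cs ^ 2
      ∧ (∑ j, |Υ0 j * δ j|) ≤ 3 * c0 * n * cs ^ 2 / lam :=
  lasso_ell1_outside_restricted_set_general n p hn f β₀ T hT d a v hmodel cs hcs Υ0 Υ hΥ0 c ℓ u lam
    hc hu hℓ1 hℓc hload S hS hlam βhat hopt δ hδ c0 hc0 hlampos hout
end

section
/- (Projection noise bound via sparse eigenvalue.) Let F be an n×p matrix, S ⊆ {1,…,p} with |S| = m, and suppose the minimal m-sparse eigenvalue φ_min(m) = min{ (1/n)‖Fα‖₂² : ‖α‖₀ ≤ m, ‖α‖₂ = 1 } is positive. Then for any v ∈ ℝⁿ, ‖P_S v‖₂ ≤ √(m/φ_min(m)) · ‖F'v/√n‖_∞, where P_S is the orthogonal projection onto the span of the columns of F indexed by S. -/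
/-!
Write `P_S v = F l` with `l` supported on `S`. Since `P_S` is an orthogonal projection,
`‖P_S v‖² = ⟪P_S v, v⟫ = ⟪l, F'v⟫ ≤ ‖l‖₁ ‖F'v‖_∞ ≤ √m ‖l‖₂ · √n ‖F'v/√n‖_∞`, while the definition
of the sparse eigenvalue gives `n φ_min(m) ‖l‖₂² ≤ ‖F l‖₂² = ‖P_S v‖²`. Eliminating `‖l‖₂`
yields `‖P_S v‖² ≤ (m / φ_min(m)) ‖F'v/√n‖_∞²`.
-/

open Finset Matrix RealInnerProductSpace

section SparseEigenvalue

variable {ι κ : Type*} [Fintype ι] [Fintype κ]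

/-- For `c = 1 / n` the infimum of this set is the minimal `m`-sparse eigenvalue `φ_min(m)`. -/
def sparseRayleighQuotients (F : Matrix ι κ ℝ) (c : ℝ) (m : ℕ) : Set ℝ :=
  {x | ∃ α : κ → ℝ, #{j | α j ≠ 0} ≤ m ∧ ∑ j, α j ^ 2 = 1 ∧ x = c * ∑ i, (F *ᵥ α) i ^ 2}

lemma bddBelow_sparseRayleighQuotients (F : Matrix ι κ ℝ) {c : ℝ} (hc : 0 ≤ c) (m : ℕ) :
    BddBelow (sparseRayleighQuotients F c m) := by
  refine ⟨0, ?_⟩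
  rintro _ ⟨α, -, -, rfl⟩
  positivity

lemma sInf_sparseRayleighQuotients_mul_le (F : Matrix ι κ ℝ) {c : ℝ} (hc : 0 ≤ c) {m : ℕ}
    {α : κ → ℝ} (hα : #{j | α j ≠ 0} ≤ m) :
    sInf (sparseRayleighQuotients F c m) * ∑ j, α j ^ 2 ≤ c * ∑ i, (F *ᵥ α) i ^ 2 := by
  set s := ∑ j, α j ^ 2
  set Q := ∑ i, (F *ᵥ α) i ^ 2
  rcases (show 0 ≤ s by positivity).eq_or_lt with hs | hs
  · rw [← hs, mul_zero]
    positivity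
  have hr : 0 < √s := Real.sqrt_pos.2 hs
  have hr2 : (√s)⁻¹ ^ 2 = s⁻¹ := by rw [inv_pow, Real.sq_sqrt hs.le]
  have hmem : c * Q / s ∈ sparseRayleighQuotients F c m := by
    refine ⟨(√s)⁻¹ • α, ?_, ?_, ?_⟩
    · simpa [hr.ne'] using hα
    · simp only [Pi.smul_apply, smul_eq_mul, mul_pow, ← mul_sum, hr2, inv_mul_cancel₀ hs.ne', s]
    · simp only [mulVec_smul, Pi.smul_apply, smul_eq_mul, mul_pow, ← mul_sum, hr2, Q]
      ring
  calc sInf (sparseRayleighQuotients F c m) * s ≤ c * Q / s * s :=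
        mul_le_mul_of_nonneg_right (csInf_le (bddBelow_sparseRayleighQuotients F hc m) hmem) hs.le
    _ = c * Q := div_mul_cancel₀ _ hs.ne'

end SparseEigenvalue

section SupportedVectors

variable {ι κ : Type*} [Fintype κ]

lemma exists_mulVec_eq_of_mem_span_image {F : Matrix ι κ ℝ} {col : κ → EuclideanSpace ℝ ι}
    (hcol : ∀ j i, col j i = F i j) {S : Set κ} {x : EuclideanSpace ℝ ι}
    (hx : x ∈ Submodule.span ℝ (col '' S)) :
    ∃ l : κ → ℝ, (∀ j ∉ S, l j = 0) ∧ x.ofLp = F *ᵥ l := by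
  obtain ⟨l, hlS, rfl⟩ := (Finsupp.mem_span_image_iff_linearCombination ℝ).1 hx
  refine ⟨l, fun j hj => Finsupp.notMem_support_iff.1 fun h => hj (hlS h), ?_⟩
  ext i
  simp [Finsupp.linearCombination_apply, Finsupp.sum_fintype, mulVec, dotProduct, hcol, mul_comm]

lemma sq_dotProduct_le_of_support_subset {S : Finset κ} {l w : κ → ℝ} {B : ℝ}
    (hl : ∀ j ∉ S, l j = 0) (hw : ∀ j, |w j| ≤ B) :
    (l ⬝ᵥ w) ^ 2 ≤ B ^ 2 * #S * ∑ j, l j ^ 2 := by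
  have hsum : l ⬝ᵥ w = ∑ j ∈ S, l j * w j :=
    (sum_subset (subset_univ S) fun j _ hj => by rw [hl j hj, zero_mul]).symm
  have habs : |l ⬝ᵥ w| ≤ B * ∑ j ∈ S, |l j| := by
    rw [hsum, mul_sum]
    refine (abs_sum_le_sum_abs _ _).trans (sum_le_sum fun j _ => ?_)
    rw [abs_mul, mul_comm]
    exact mul_le_mul_of_nonneg_right (hw j) (abs_nonneg _)
  have hCS : (∑ j ∈ S, |l j|) ^ 2 ≤ #S * ∑ j, l j ^ 2 := by
    refine sq_sum_le_card_mul_sum_sq.trans (mul_le_mul_of_nonneg_left ?_ (by positivity))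
    simp only [sq_abs]
    exact sum_le_sum_of_subset_of_nonneg (subset_univ S) fun j _ _ => sq_nonneg _
  calc (l ⬝ᵥ w) ^ 2 = |l ⬝ᵥ w| ^ 2 := (sq_abs _).symm
    _ ≤ (B * ∑ j ∈ S, |l j|) ^ 2 := pow_le_pow_left₀ (abs_nonneg _) habs 2
    _ ≤ B ^ 2 * (#S * ∑ j, l j ^ 2) := by rw [mul_pow]; gcongr
    _ = B ^ 2 * #S * ∑ j, l j ^ 2 := (mul_assoc _ _ _).symm

end SupportedVectors

lemma Submodule.norm_starProjection_sq_eq_inner {E : Type*} [NormedAddCommGroup E]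
    [InnerProductSpace ℝ E] (K : Submodule ℝ E) [K.HasOrthogonalProjection] (v : E) :
    ‖K.starProjection v‖ ^ 2 = ⟪K.starProjection v, v⟫ := by
  have h := K.re_inner_starProjection_eq_normSq v
  rw [RCLike.re_to_real, Submodule.coe_norm, ← K.starProjection_apply] at h
  exact h.symm

lemma abs_le_mul_iSup_abs_div {κ : Type*} [Finite κ] (w : κ → ℝ) {c : ℝ} (hc : 0 < c) (j : κ) :
    |w j| ≤ c * ⨆ k, |w k / c| := by
  have h := le_ciSup (f := fun k => |w k / c|) (Set.finite_range _).bddAbove j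
  rwa [abs_div, abs_of_pos hc, div_le_iff₀' hc] at h

lemma le_div_of_sq_le_mul_of_mul_le {x y a c : ℝ} (hx : 0 ≤ x) (ha : 0 < a) (hc : 0 ≤ c)
    (hup : x ^ 2 ≤ c * y) (hlow : a * y ≤ x) : x ≤ c / a := by
  rw [le_div_iff₀ ha]
  rcases hx.eq_or_lt with rfl | hx
  · simpa using hc
  nlinarith [mul_le_mul_of_nonneg_left hlow hc]

/-- Projection noise bound via the minimal sparse eigenvalue: for any `S` with
`|S| = m` and `φ_min(m) > 0`, `‖P_S v‖₂ ≤ √(m/φ_min(m)) · ‖F'v/√n‖_∞`, where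
`P_S` is the orthogonal projection onto the span of the columns of `F` in `S`. -/
theorem projection_noise_bound
    (n p m : ℕ) (hn : 0 < n)
    (F : Matrix (Fin n) (Fin p) ℝ)
    (Sset : Finset (Fin p)) (hm : Sset.card = m)
    (col : Fin p → EuclideanSpace ℝ (Fin n)) (hcol : ∀ j i, col j i = F i j)
    (φmin : ℝ)
    (hφ : φmin = sInf {x : ℝ | ∃ α : Fin p → ℝ,
      (Finset.univ.filter (fun j => α j ≠ 0)).card ≤ m ∧ (∑ j, (α j) ^ 2) = 1 ∧
      x = (1 / (n : ℝ)) * ∑ i, (∑ j, F i j * α j) ^ 2})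
    (hφpos : 0 < φmin)
    (v : EuclideanSpace ℝ (Fin n)) :
    ‖(Submodule.orthogonalProjectionOnto (Submodule.span ℝ (col '' (Sset : Set (Fin p)))) v :
        EuclideanSpace ℝ (Fin n))‖
      ≤ Real.sqrt ((m : ℝ) / φmin) * ⨆ j, |(∑ i, F i j * v i) / Real.sqrt n| := by
  set U := Submodule.span ℝ (col '' (Sset : Set (Fin p)))
  set M := ⨆ j, |(∑ i, F i j * v i) / √n|
  have hn' : (0 : ℝ) < n := Nat.cast_pos.2 hn
  rw [← U.starProjection_apply]
  obtain ⟨l, hlS, hPl⟩ := exists_mulVec_eq_of_mem_span_image hcol (U.starProjection_apply_mem v)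
  have hPv := U.norm_starProjection_sq_eq_inner v
  generalize U.starProjection v = P at hPl hPv ⊢
  have hupper : (‖P‖ ^ 2) ^ 2 ≤ (√n * M) ^ 2 * m * ∑ j, l j ^ 2 := by
    rw [hPv, EuclideanSpace.inner_eq_star_dotProduct, star_trivial, hPl, dotProduct_mulVec,
      ← mulVec_transpose, dotProduct_comm, ← hm]
    exact sq_dotProduct_le_of_support_subset hlS
      (abs_le_mul_iSup_abs_div _ (Real.sqrt_pos.2 hn'))
  have hlower : n * φmin * ∑ j, l j ^ 2 ≤ ‖P‖ ^ 2 := by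
    have h : φmin * ∑ j, l j ^ 2 ≤ 1 / n * ∑ i, (F *ᵥ l) i ^ 2 := by
      rw [hφ]
      exact sInf_sparseRayleighQuotients_mul_le F (by positivity) <| hm ▸ card_le_card
        fun j hj => by_contra fun hjS => (mem_filter.1 hj).2 (hlS j hjS)
    rw [← hPl, one_div_mul_eq_div, le_div_iff₀' hn', ← mul_assoc] at h
    rwa [EuclideanSpace.real_norm_sq_eq]
  have hM : 0 ≤ M := Real.iSup_nonneg fun j => abs_nonneg _
  rw [← sq_le_sq₀ (norm_nonneg P) (by positivity)]
  calc ‖P‖ ^ 2 ≤ (√n * M) ^ 2 * m / (n * φmin) :=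
        le_div_of_sq_le_mul_of_mul_le (by positivity) (by positivity) (by positivity) hupper hlower
    _ = (√(m / φmin) * M) ^ 2 := by
        rw [mul_pow, mul_pow, Real.sq_sqrt hn'.le, Real.sq_sqrt (by positivity)]
        field_simp
end
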